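/- arXiv:2308.13981 — 6 statements merged into one kernel-verified Lean document; each statement's English description precedes it below -/
import Mathlib

section
/- Fix positive integers n, k and parameters η₁, η₂ > 0 and σ_u², σ_v² ≥ 0. Let {s_{t,j}}, {e_{t,j}}, {r_{t,j}}, {e1_{t,j}}, {cu_{t,j}} (for t = 1,…,k and j = 0,…,n−1) and {e2_j}, {cv_j} (for j = 0,…,n−1) be mutually independent real-valued random variables with mean 0 and finite variance, where Var(s_{t,j}) = Var(e_{t,j}) = Var(r_{t,j}) = η₁/2, Var(e1_{t,j}) = Var(e2_j) = η₂/2, Var(cu_{t,j}) = σ_u², and Var(cv_j) = σ_v². For sequences a = (a_j), b = (b_j) let (a ⊛ b)_i = Σ_{j=0}^{n−1} ε(i,j) a_{(i−j) mod n} b_j denote the negacyclic convolution, where ε(i,j) = 1 if j ≤ i and −1 if j > i. Define the decoding-noise coefficient n_{e,i} = Σ_{t=1}^{k} (e_t ⊛ r_t)_i + e2_i + cv_i − Σ_{t=1}^{k} (s_t ⊛ (e1_t + cu_t))_i. Then E[n_{e,i}] = 0 and Var(n_{e,i}) = k·n·η₁²/4 + (k·n·η₁/2)·(η₂/2 + σ_u²)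 + η₂/2 + σ_v² for every i ∈ {0,…,n−1}. -/
/-!
Expanding the negacyclic convolutions writes `n_{e,i}` as a `±1`-combination of square-free
monomials `∏ x ∈ S, F x` in the independent centred family `F` of all noise coefficients: the
pairs `e_{t,i-j} r_{t,j}`, `s_{t,i-j} e1_{t,j}`, `s_{t,i-j} cu_{t,j}` and the singletons `e2_i`,
`cv_i`. For such a family `E[∏_S F · ∏_T F]` vanishes unless `S = T`, since some variable then
occurs exactly once, and equals `∏_S Var F_x` if `S = T`. The monomials are pairwise distinct
(the second factor of a pair determines it), so the mean is `0` and the variance is the sum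
of the `k n` products `η₁/2 · η₁/2`, `η₁/2 · η₂/2`, `η₁/2 · σᵤ²`, plus `η₂/2 + σᵥ²`.
-/

open MeasureTheory ProbabilityTheory

/-- The `i`-th coefficient of the negacyclic convolution of two real-valued random
sequences: `(a ⊛ b)_i = ∑_{j=0}^{n-1} ε(i,j) a_{(i-j) mod n} b_j`, where `ε(i,j) = 1`
if `j ≤ i` and `ε(i,j) = -1` if `j > i`. -/
noncomputable def nconv {Ω : Type*} {n : ℕ} (a b : Fin n → Ω → ℝ) (i : Fin n) (ω : Ω) : ℝ :=
  ∑ j : Fin n, (if (j : ℕ) ≤ (i : ℕ) then (1 : ℝ) else -1) * a (i - j) ω * b j ω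

/-- The `i`-th Kyber decoding-noise coefficient
`n_{e,i} = ∑_t (e_t ⊛ r_t)_i + e2_i + cv_i − ∑_t (s_t ⊛ (e1_t + cu_t))_i`. -/
noncomputable def kyberNoise {Ω : Type*} {k n : ℕ}
    (s e r e1 cu : Fin k → Fin n → Ω → ℝ) (e2 cv : Fin n → Ω → ℝ)
    (i : Fin n) (ω : Ω) : ℝ :=
  (∑ t : Fin k, nconv (e t) (r t) i ω) + e2 i ω + cv i ω
    - ∑ t : Fin k, nconv (s t) (fun j ω' => e1 t j ω' + cu t j ω') i ω

theorem Finset.prod_mul_prod_eq_prod_union_pow {ι M : Type*} [CommMonoid M] [DecidableEq ι]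
    (s t : Finset ι) (f : ι → M) :
    (∏ x ∈ s, f x) * ∏ x ∈ t, f x =
      ∏ x ∈ s ∪ t, f x ^ ((if x ∈ s then 1 else 0) + if x ∈ t then 1 else 0) := by
  simp only [pow_add, pow_ite, pow_one, pow_zero, Finset.prod_mul_distrib, Finset.prod_ite_mem,
    Finset.union_inter_cancel_left, Finset.union_inter_cancel_right]

lemma MeasureTheory.MemLp.integrable_pow_of_le_two {Ω : Type*} [MeasurableSpace Ω]
    {P : Measure Ω} [IsFiniteMeasure P] {f : Ω → ℝ} (hf : MemLp f 2 P) {k : ℕ}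
    (hk : k ≤ 2) :
    Integrable (fun ω => f ω ^ k) P := by
  interval_cases k
  · simp
  · simpa using hf.integrable one_le_two
  · exact hf.integrable_sq

section Monomials

variable {Ω ι : Type*} [MeasurableSpace Ω] {P : Measure Ω} {F : ι → Ω → ℝ}

lemma ProbabilityTheory.iIndepFun.integral_finsetProd (hF : iIndepFun F P)
    (hFm : ∀ x, AEMeasurable (F x) P) (S : Finset ι) :
    ∫ ω, ∏ x ∈ S, F x ω ∂P = ∏ x ∈ S, ∫ ω, F x ω ∂P := by
  classical
  have := hF.isProbabilityMeasure
  induction S using Finset.induction_on with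
  | empty => simp
  | insert a S ha ih =>
    have hind : IndepFun (F a) (∏ x ∈ S, F x) P :=
      (hF.indepFun_finsetProd_of_notMem₀ hFm ha).symm
    have h := hind.integral_fun_mul_eq_mul_integral (hFm a).aestronglyMeasurable
      (Finset.aemeasurable_prod S fun x _ => hFm x).aestronglyMeasurable
    simp only [Finset.prod_insert ha, ← ih]
    simpa only [Finset.prod_apply] using h

lemma ProbabilityTheory.iIndepFun.integrable_finsetProd (hF : iIndepFun F P)
    (hFm : ∀ x, AEMeasurable (F x) P) {S : Finset ι} (hint : ∀ x ∈ S, Integrable (F x) P) :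
    Integrable (fun ω => ∏ x ∈ S, F x ω) P := by
  classical
  have := hF.isProbabilityMeasure
  induction S using Finset.induction_on with
  | empty => simp
  | insert a S ha ih =>
    simp only [Finset.prod_insert ha]
    have hind : IndepFun (∏ x ∈ S, F x) (F a) P := hF.indepFun_finsetProd_of_notMem₀ hFm ha
    have hS : Integrable (∏ x ∈ S, F x) P := by
      rw [Finset.prod_fn]; exact ih fun x hx => hint x (Finset.mem_insert_of_mem hx)
    have h := hind.symm.integrable_mul (hint a (Finset.mem_insert_self a S)) hS
    rwa [Finset.prod_fn, Pi.mul_def] at h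

lemma ProbabilityTheory.iIndepFun.pow (hF : iIndepFun F P) (k : ι → ℕ) :
    iIndepFun (fun x ω => F x ω ^ k x) P :=
  hF.comp (fun x y => y ^ k x) fun x => measurable_id.pow_const (k x)

lemma ProbabilityTheory.iIndepFun.integrable_prod_mul_prod (hF : iIndepFun F P)
    (hL2 : ∀ x, MemLp (F x) 2 P) (S T : Finset ι) :
    Integrable (fun ω => (∏ x ∈ S, F x ω) * ∏ x ∈ T, F x ω) P := by
  classical
  have := hF.isProbabilityMeasure
  set k : ι → ℕ := fun x => (if x ∈ S then 1 else 0) + if x ∈ T then 1 else 0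
  simp_rw [Finset.prod_mul_prod_eq_prod_union_pow]
  exact (hF.pow k).integrable_finsetProd (fun x => (hL2 x).aemeasurable.pow_const _)
    fun x _ => (hL2 x).integrable_pow_of_le_two (by simp only [k]; split_ifs <;> norm_num)
lemma ProbabilityTheory.iIndepFun.integral_prod_mul_prod [DecidableEq ι] (hF : iIndepFun F P)
    (hL2 : ∀ x, MemLp (F x) 2 P) (hmean : ∀ x, ∫ ω, F x ω ∂P = 0) (S T : Finset ι) :
    ∫ ω, (∏ x ∈ S, F x ω) * (∏ x ∈ T, F x ω) ∂P =
      if S = T then ∏ x ∈ S, Var[F x; P] else 0 := by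
  set k : ι → ℕ := fun x => (if x ∈ S then 1 else 0) + if x ∈ T then 1 else 0
  simp_rw [Finset.prod_mul_prod_eq_prod_union_pow]
  rw [(hF.pow k).integral_finsetProd fun x => (hL2 x).aemeasurable.pow_const _]
  split_ifs with hST
  · subst hST
    rw [Finset.union_self]
    refine Finset.prod_congr rfl fun x hx => ?_
    simp only [k, if_pos hx, variance_of_integral_eq_zero (hL2 x).aemeasurable (hmean x)]
  · obtain ⟨x, hx⟩ : ∃ x, ¬(x ∈ S ↔ x ∈ T) := by simpa [Finset.ext_iff] using hST
    refine Finset.prod_eq_zero (i := x) (Finset.mem_union.2 (by tauto)) ?_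
    have hkx : k x = 1 := by simp only [k]; split_ifs <;> tauto
    simp [hkx, hmean x]

lemma ProbabilityTheory.iIndepFun.memLp_prod (hF : iIndepFun F P)
    (hL2 : ∀ x, MemLp (F x) 2 P) (S : Finset ι) : MemLp (fun ω => ∏ x ∈ S, F x ω) 2 P :=
  (memLp_two_iff_integrable_sq (Finset.aestronglyMeasurable_fun_prod S
    fun x _ => (hL2 x).aestronglyMeasurable)).2 <| by
      simpa only [sq] using hF.integrable_prod_mul_prod hL2 S S

lemma ProbabilityTheory.iIndepFun.integral_prod_eq_zero (hF : iIndepFun F P)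
    (hL2 : ∀ x, MemLp (F x) 2 P) (hmean : ∀ x, ∫ ω, F x ω ∂P = 0) {S : Finset ι}
    (hS : S.Nonempty) : ∫ ω, ∏ x ∈ S, F x ω ∂P = 0 := by
  classical
  simpa [hS.ne_empty] using hF.integral_prod_mul_prod hL2 hmean S ∅

lemma ProbabilityTheory.iIndepFun.covariance_prod_prod [DecidableEq ι] (hF : iIndepFun F P)
    (hL2 : ∀ x, MemLp (F x) 2 P) (hmean : ∀ x, ∫ ω, F x ω ∂P = 0) {S T : Finset ι}
    (hS : S.Nonempty) :
    cov[fun ω => ∏ x ∈ S, F x ω, fun ω => ∏ x ∈ T, F x ω; P] =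
      if S = T then ∏ x ∈ S, Var[F x; P] else 0 := by
  have := hF.isProbabilityMeasure
  rw [covariance_eq_sub (hF.memLp_prod hL2 S) (hF.memLp_prod hL2 T),
    hF.integral_prod_eq_zero hL2 hmean hS, zero_mul, sub_zero]
  exact hF.integral_prod_mul_prod hL2 hmean S T
variable {M : Type*} [Fintype M]

lemma ProbabilityTheory.iIndepFun.integral_sum_mul_prod (hF : iIndepFun F P)
    (hL2 : ∀ x, MemLp (F x) 2 P) (hmean : ∀ x, ∫ ω, F x ω ∂P = 0) (c : M → ℝ)
    {S : M → Finset ι} (hS : ∀ m, (S m).Nonempty) :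
    ∫ ω, ∑ m, c m * ∏ x ∈ S m, F x ω ∂P = 0 := by
  have := hF.isProbabilityMeasure
  rw [integral_finsetSum _ fun m _ => ((hF.memLp_prod hL2 (S m)).const_mul (c m)).integrable
    one_le_two]
  simp [integral_const_mul, hF.integral_prod_eq_zero hL2 hmean (hS _)]

lemma ProbabilityTheory.iIndepFun.variance_sum_mul_prod (hF : iIndepFun F P)
    (hL2 : ∀ x, MemLp (F x) 2 P) (hmean : ∀ x, ∫ ω, F x ω ∂P = 0) (c : M → ℝ)
    {S : M → Finset ι} (hS : ∀ m, (S m).Nonempty) (hS_inj : Function.Injective S) :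
    Var[fun ω => ∑ m, c m * ∏ x ∈ S m, F x ω; P] =
      ∑ m, c m ^ 2 * ∏ x ∈ S m, Var[F x; P] := by
  classical
  have := hF.isProbabilityMeasure
  rw [variance_fun_sum fun m => (hF.memLp_prod hL2 (S m)).const_mul (c m)]
  refine Finset.sum_congr rfl fun m _ => ?_
  simp_rw [covariance_const_mul_left, covariance_const_mul_right,
    hF.covariance_prod_prod hL2 hmean (hS m), hS_inj.eq_iff]
  simp [sq, mul_assoc]

end Monomials

section Kyber

variable {Ω : Type*} {k n : ℕ}

-- The codes `0, …, 4` in `Fin 5` stand for `s, e, r, e1, cu`, and `0, 1` in `Fin 2` for `e2, cv`.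
noncomputable def kyberVars (s e r e1 cu : Fin k → Fin n → Ω → ℝ) (e2 cv : Fin n → Ω → ℝ) :
    (Fin 5 × Fin k × Fin n) ⊕ (Fin 2 × Fin n) → Ω → ℝ :=
  Sum.elim (fun x => ![s, e, r, e1, cu] x.1 x.2.1 x.2.2) (fun x => ![e2, cv] x.1 x.2)

-- For `c = 0, 1, 2` the monomial `(c, t, j)` is `e_{t,i-j} r_{t,j}`, `s_{t,i-j} e1_{t,j}`,
-- `s_{t,i-j} cu_{t,j}` respectively.
def kyberMonomial (i : Fin n) :
    (Fin 3 × Fin k × Fin n) ⊕ Fin 2 → Finset ((Fin 5 × Fin k × Fin n) ⊕ (Fin 2 × Fin n))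
  | .inl (c, t, j) => {.inl (![1, 0, 0] c, t, i - j), .inl (![2, 3, 4] c, t, j)}
  | .inr c => {.inr (c, i)}

def kyberCoeff (i : Fin n) : (Fin 3 × Fin k × Fin n) ⊕ Fin 2 → ℝ
  | .inl (c, _, j) => ![1, -1, -1] c * if (j : ℕ) ≤ i then 1 else -1
  | .inr _ => 1

lemma kyberMonomial_nonempty (i : Fin n) (m : (Fin 3 × Fin k × Fin n) ⊕ Fin 2) :
    (kyberMonomial i m).Nonempty := by
  rcases m with ⟨c, t, j⟩ | c <;> simp [kyberMonomial]

lemma kyberMonomial_injective (i : Fin n) : Function.Injective (kyberMonomial (k := k) i) := by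
  rintro (⟨c, t, j⟩ | c) (⟨c', t', j'⟩ | c') h <;>
    simp only [kyberMonomial, Finset.ext_iff] at h
  · have := h (.inl (![2, 3, 4] c, t, j))
    fin_cases c <;> fin_cases c' <;> simp_all
  · simpa using h (.inr (c', i))
  · simpa using h (.inr (c, i))
  · simpa using h (.inr (c, i))
variable {s e r e1 cu : Fin k → Fin n → Ω → ℝ} {e2 cv : Fin n → Ω → ℝ}

lemma forall_kyberVars {p : (Ω → ℝ) → Prop}
    (h : ∀ t j, p (s t j) ∧ p (e t j) ∧ p (r t j) ∧ p (e1 t j) ∧ p (cu t j))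
    (h' : ∀ j, p (e2 j) ∧ p (cv j)) : ∀ x, p (kyberVars s e r e1 cu e2 cv x) := by
  rintro (⟨c, t, j⟩ | ⟨c, j⟩) <;> fin_cases c
  exacts [(h t j).1, (h t j).2.1, (h t j).2.2.1, (h t j).2.2.2.1, (h t j).2.2.2.2,
    (h' j).1, (h' j).2]

lemma prod_kyberMonomial_inl {M : Type*} [CommMonoid M]
    (V : (Fin 5 × Fin k × Fin n) ⊕ (Fin 2 × Fin n) → M) (i : Fin n) (c : Fin 3) (t : Fin k)
    (j : Fin n) :
    ∏ x ∈ kyberMonomial i (.inl (c, t, j)), V x =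
      V (.inl (![1, 0, 0] c, t, i - j)) * V (.inl (![2, 3, 4] c, t, j)) :=
  Finset.prod_pair (by fin_cases c <;> simp)

lemma kyberNoise_eq_sum_mul_prod (i : Fin n) :
    kyberNoise s e r e1 cu e2 cv i = fun ω =>
      ∑ m, kyberCoeff i m * ∏ x ∈ kyberMonomial i m, kyberVars s e r e1 cu e2 cv x ω := by
  funext ω
  simp only [Fintype.sum_sum_type, Fintype.sum_prod_type, prod_kyberMonomial_inl]
  simp only [kyberNoise, nconv, Fin.sum_univ_three, Fin.sum_univ_two, kyberCoeff, kyberMonomial,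
    Finset.prod_singleton, kyberVars, Matrix.cons_val, Sum.elim_inl, Sum.elim_inr]
  simp only [mul_add, Finset.sum_add_distrib, one_mul, neg_mul, Finset.sum_neg_distrib,
    mul_assoc]
  ring

lemma kyberCoeff_sq (i : Fin n) (m : (Fin 3 × Fin k × Fin n) ⊕ Fin 2) :
    kyberCoeff i m ^ 2 = 1 := by
  rcases m with ⟨c, -, j⟩ | c
  · simp only [kyberCoeff, mul_pow]
    fin_cases c <;> split_ifs <;> norm_num
  · simp [kyberCoeff]

lemma sum_kyberCoeff_sq_mul_prod (i : Fin n)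
    (V : (Fin 5 × Fin k × Fin n) ⊕ (Fin 2 × Fin n) → ℝ) :
    ∑ m, kyberCoeff i m ^ 2 * ∏ x ∈ kyberMonomial i m, V x =
      ∑ t, ∑ j, (V (.inl (1, t, i - j)) * V (.inl (2, t, j))
        + V (.inl (0, t, i - j)) * (V (.inl (3, t, j)) + V (.inl (4, t, j))))
      + V (.inr (0, i)) + V (.inr (1, i)) := by
  simp only [kyberCoeff_sq, one_mul, Fintype.sum_sum_type, Fintype.sum_prod_type,
    prod_kyberMonomial_inl]
  simp only [Fin.sum_univ_three, Fin.sum_univ_two, kyberMonomial, Finset.prod_singleton,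
    Matrix.cons_val, mul_add, Finset.sum_add_distrib]
  ring

end Kyber
theorem kyberNoise_mean_variance_general
    {Ω : Type*} [MeasurableSpace Ω] (P : Measure Ω)
    (n k : ℕ)
    (η₁ η₂ : ℝ)
    (σu2 σv2 : ℝ)
    (s e r e1 cu : Fin k → Fin n → Ω → ℝ) (e2 cv : Fin n → Ω → ℝ)
    (hL2 : ∀ t j, MemLp (s t j) 2 P ∧ MemLp (e t j) 2 P ∧ MemLp (r t j) 2 P ∧
      MemLp (e1 t j) 2 P ∧ MemLp (cu t j) 2 P)
    (hL2' : ∀ j, MemLp (e2 j) 2 P ∧ MemLp (cv j) 2 P)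
    (hmean : ∀ t j, (∫ ω, s t j ω ∂P) = 0 ∧ (∫ ω, e t j ω ∂P) = 0 ∧
      (∫ ω, r t j ω ∂P) = 0 ∧ (∫ ω, e1 t j ω ∂P) = 0 ∧ (∫ ω, cu t j ω ∂P) = 0)
    (hmean' : ∀ j, (∫ ω, e2 j ω ∂P) = 0 ∧ (∫ ω, cv j ω ∂P) = 0)
    (hvar : ∀ t j, variance (s t j) P = η₁ / 2 ∧ variance (e t j) P = η₁ / 2 ∧
      variance (r t j) P = η₁ / 2 ∧ variance (e1 t j) P = η₂ / 2 ∧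
      variance (cu t j) P = σu2)
    (hvar' : ∀ j, variance (e2 j) P = η₂ / 2 ∧ variance (cv j) P = σv2)
    (hindep : iIndepFun
      (Sum.elim (fun x : Fin 5 × Fin k × Fin n => ![s, e, r, e1, cu] x.1 x.2.1 x.2.2)
        (fun x : Fin 2 × Fin n => ![e2, cv] x.1 x.2)) P)
    (i : Fin n) :
    (∫ ω, kyberNoise s e r e1 cu e2 cv i ω ∂P) = 0 ∧
      variance (kyberNoise s e r e1 cu e2 cv i) P =
        (k : ℝ) * n * η₁ ^ 2 / 4 + ((k : ℝ) * n * η₁ / 2) * (η₂ / 2 + σu2)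
          + η₂ / 2 + σv2 := by
  have hF : iIndepFun (kyberVars s e r e1 cu e2 cv) P := hindep
  have hL2F := forall_kyberVars (p := (MemLp · 2 P)) hL2 hL2'
  have hmeanF := forall_kyberVars (p := fun X => ∫ ω, X ω ∂P = 0) hmean hmean'
  rw [kyberNoise_eq_sum_mul_prod]
  refine ⟨hF.integral_sum_mul_prod hL2F hmeanF _ (kyberMonomial_nonempty i), ?_⟩
  rw [hF.variance_sum_mul_prod hL2F hmeanF _ (kyberMonomial_nonempty i) (kyberMonomial_injective i),
    sum_kyberCoeff_sq_mul_prod]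
  simp only [kyberVars, Sum.elim_inl, Sum.elim_inr, Matrix.cons_val, hvar, hvar', Finset.sum_const,
    Finset.card_univ, Fintype.card_fin, nsmul_eq_mul]
  ring

/-- Second-moment analysis of the Kyber decoding noise: each coefficient `n_{e,i}` has
mean `0` and variance `k·n·η₁²/4 + (k·n·η₁/2)·(η₂/2 + σᵤ²) + η₂/2 + σᵥ²`. -/
theorem kyberNoise_mean_variance
    {Ω : Type*} [MeasurableSpace Ω] (P : Measure Ω) [IsProbabilityMeasure P]
    (n k : ℕ) (hn : 0 < n) (hk : 0 < k)
    (η₁ η₂ : ℝ) (hη₁ : 0 < η₁) (hη₂ : 0 < η₂)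
    (σu2 σv2 : ℝ) (hσu2 : 0 ≤ σu2) (hσv2 : 0 ≤ σv2)
    (s e r e1 cu : Fin k → Fin n → Ω → ℝ) (e2 cv : Fin n → Ω → ℝ)
    (hmeas : ∀ t j, Measurable (s t j) ∧ Measurable (e t j) ∧ Measurable (r t j) ∧
      Measurable (e1 t j) ∧ Measurable (cu t j))
    (hmeas' : ∀ j, Measurable (e2 j) ∧ Measurable (cv j))
    (hL2 : ∀ t j, MemLp (s t j) 2 P ∧ MemLp (e t j) 2 P ∧ MemLp (r t j) 2 P ∧
      MemLp (e1 t j) 2 P ∧ MemLp (cu t j) 2 P)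
    (hL2' : ∀ j, MemLp (e2 j) 2 P ∧ MemLp (cv j) 2 P)
    (hmean : ∀ t j, (∫ ω, s t j ω ∂P) = 0 ∧ (∫ ω, e t j ω ∂P) = 0 ∧
      (∫ ω, r t j ω ∂P) = 0 ∧ (∫ ω, e1 t j ω ∂P) = 0 ∧ (∫ ω, cu t j ω ∂P) = 0)
    (hmean' : ∀ j, (∫ ω, e2 j ω ∂P) = 0 ∧ (∫ ω, cv j ω ∂P) = 0)
    (hvar : ∀ t j, variance (s t j) P = η₁ / 2 ∧ variance (e t j) P = η₁ / 2 ∧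
      variance (r t j) P = η₁ / 2 ∧ variance (e1 t j) P = η₂ / 2 ∧
      variance (cu t j) P = σu2)
    (hvar' : ∀ j, variance (e2 j) P = η₂ / 2 ∧ variance (cv j) P = σv2)
    (hindep : iIndepFun
      (Sum.elim (fun x : Fin 5 × Fin k × Fin n => ![s, e, r, e1, cu] x.1 x.2.1 x.2.2)
        (fun x : Fin 2 × Fin n => ![e2, cv] x.1 x.2)) P)
    (i : Fin n) :
    (∫ ω, kyberNoise s e r e1 cu e2 cv i ω ∂P) = 0 ∧
      variance (kyberNoise s e r e1 cu e2 cv i) P =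
        (k : ℝ) * n * η₁ ^ 2 / 4 + ((k : ℝ) * n * η₁ / 2) * (η₂ / 2 + σu2)
          + η₂ / 2 + σv2 :=
  kyberNoise_mean_variance_general P n k η₁ η₂ σu2 σv2 s e r e1 cu e2 cv hL2 hL2' hmean hmean' hvar
    hvar' hindep i
end

section
/- In the setting of the Kyber decoding-noise coefficients: with the same mutually independent mean-zero families {s_{t,j}}, {e_{t,j}}, {r_{t,j}}, {e1_{t,j}}, {cu_{t,j}}, {e2_j}, {cv_j} of finite-variance real random variables and n_{e,i} = Σ_{t=1}^{k} (e_t ⊛ r_t)_i + e2_i + cv_i − Σ_{t=1}^{k} (s_t ⊛ (e1_t + cu_t))_i, the distinct coefficients are uncorrelated: Cov(n_{e,i}, n_{e,i'}) = 0 for all i ≠ i' in {0,…,n−1}. -/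
/-!
Every coefficient `n_{e,i}` is a sum of terms `c · X_u · X_v` with `u ≠ v` and of single
variables `X_w`, all drawn from one independent family of centred square-integrable variables.
For `i ≠ i'` the indices are arranged so that every product of a term of `n_{e,i}` with a term of
`n_{e,i'}` contains some variable exactly once; that variable is independent of the other
factors, so the product has mean zero. Bilinearity of the covariance then gives
`Cov(n_{e,i}, n_{e,i'}) = 0`.
-/

open MeasureTheory ProbabilityTheory

namespace ProbabilityTheory

variable {Ω ι : Type*} {mΩ : MeasurableSpace Ω} {P : Measure Ω} {X : ι → Ω → ℝ}

lemma measurable_iSup_comap_of_mem {T : Set ι} {j : ι} (hj : j ∈ T) :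
    Measurable[⨆ j ∈ T, MeasurableSpace.comap (X j) inferInstance] (X j) :=
  (comap_measurable (X j)).mono (le_iSup₂ (f := fun j _ => MeasurableSpace.comap (X j) _) j hj)
    le_rfl

lemma iIndepFun.indepFun_of_measurable_iSup (hind : iIndepFun X P)
    (hm : ∀ j, Measurable (X j)) {u : ι} {T : Set ι} (hu : u ∉ T) {F : Ω → ℝ}
    (hF : Measurable[⨆ j ∈ T, MeasurableSpace.comap (X j) inferInstance] F) :
    IndepFun (X u) F P := by
  have h := indep_iSup_of_disjoint (fun j => (hm j).comap_le) hind.iIndep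
    (Set.disjoint_singleton_left.2 hu)
  rw [IndepFun_iff_Indep]
  exact indep_of_indep_of_le h (le_iSup₂ (f := fun j (_ : j ∈ ({u} : Set ι)) =>
    MeasurableSpace.comap (X j) _) u rfl) hF.comap_le

lemma iIndepFun.integral_mul_eq_zero_of_notMem (hind : iIndepFun X P)
    (hm : ∀ j, Measurable (X j)) {u : ι} (hu0 : ∫ ω, X u ω ∂P = 0) {T : Set ι} (hu : u ∉ T)
    {F : Ω → ℝ} (hF : Measurable[⨆ j ∈ T, MeasurableSpace.comap (X j) inferInstance] F) :
    ∫ ω, X u ω * F ω ∂P = 0 := by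
  have hF' : Measurable F := hF.mono (iSup₂_le fun j _ => (hm j).comap_le) le_rfl
  have h := (hind.indepFun_of_measurable_iSup hm hu hF).integral_mul_eq_mul_integral
    (hm u).aestronglyMeasurable hF'.aestronglyMeasurable
  simpa [hu0] using h

lemma IndepFun.memLp_two_mul {Y Z : Ω → ℝ} (hYZ : IndepFun Y Z P) (hY : MemLp Y 2 P)
    (hZ : MemLp Z 2 P) : MemLp (Y * Z) 2 P := by
  have hsq : IndepFun (fun ω => Y ω ^ 2) (fun ω => Z ω ^ 2) P :=
    hYZ.comp (measurable_id.pow_const 2) (measurable_id.pow_const 2)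
  rw [memLp_two_iff_integrable_sq (hY.1.mul hZ.1)]
  simpa only [Pi.mul_def, mul_pow] using hsq.integrable_mul hY.integrable_sq hZ.integrable_sq

end ProbabilityTheory

section NoiseTerms

variable {Ω ι κ A B : Type*} {mΩ : MeasurableSpace Ω} {P : Measure Ω}
  {X : ι → Ω → ℝ} {c : κ → A → ℝ} {p q : κ → A → ι} {w : κ → B → ι}

variable (X c p q w) in
def noiseTerm (i : κ) : A ⊕ B → Ω → ℝ
  | .inl a => fun ω => c i a * (X (p i a) ω * X (q i a) ω)
  | .inr b => X (w i b)

structure SeparatedMonomials (p q : κ → A → ι) (w : κ → B → ι) : Prop where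
  left_ne_right : ∀ i i' a a', p i a ≠ q i' a'
  left_ne_linear : ∀ i i' a b, p i a ≠ w i' b
  right_ne_linear : ∀ i i' a b, q i a ≠ w i' b
  eq_of_left_eq_of_right_eq : ∀ i i' a a', p i a = p i' a' → q i a = q i' a' → i = i'
  eq_of_linear_eq : ∀ i i' b b', w i b = w i' b' → i = i'

namespace SeparatedMonomials

lemma memLp_noiseTerm (hS : SeparatedMonomials p q w) (hind : iIndepFun X P)
    (hL2 : ∀ j, MemLp (X j) 2 P) (i : κ) (x : A ⊕ B) :
    MemLp (noiseTerm X c p q w i x) 2 P := by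
  rcases x with a | b
  · exact ((hind.indepFun (hS.left_ne_right i i a a)).memLp_two_mul (hL2 _) (hL2 _)).const_mul _
  · exact hL2 _

lemma integral_noiseTerm (hS : SeparatedMonomials p q w) (hind : iIndepFun X P)
    (hm : ∀ j, Measurable (X j)) (h0 : ∀ j, ∫ ω, X j ω ∂P = 0) (i : κ) (x : A ⊕ B) :
    ∫ ω, noiseTerm X c p q w i x ω ∂P = 0 := by
  rcases x with a | b
  · simp only [noiseTerm, integral_const_mul]
    rw [hind.integral_mul_eq_zero_of_notMem hm (h0 _) (T := {q i a})
      (hS.left_ne_right i i a a) (measurable_iSup_comap_of_mem rfl), mul_zero]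
  · exact h0 _

lemma integral_noiseTerm_mul_noiseTerm (hS : SeparatedMonomials p q w) (hind : iIndepFun X P)
    (hm : ∀ j, Measurable (X j)) (h0 : ∀ j, ∫ ω, X j ω ∂P = 0) {i i' : κ} (hii' : i ≠ i')
    (x y : A ⊕ B) : ∫ ω, noiseTerm X c p q w i x ω * noiseTerm X c p q w i' y ω ∂P = 0 := by
  have hX {T : Set ι} {j : ι} (hj : j ∈ T) := measurable_iSup_comap_of_mem (X := X) hj
  rcases x with a | b <;> rcases y with a' | b' <;> simp only [noiseTerm]
  · by_cases hp : p i a = p i' a'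
    · have hq : q i a ≠ q i' a' := fun hq => hii' (hS.eq_of_left_eq_of_right_eq i i' a a' hp hq)
      calc _ = ∫ ω, X (q i a) ω * (c i a * c i' a' * X (p i a) ω * X (p i' a') ω
              * X (q i' a') ω) ∂P := by congr 1; funext ω; ring
        _ = 0 := hind.integral_mul_eq_zero_of_notMem hm (h0 _) (T := {p i a, p i' a', q i' a'})
              (by simp [hq, (hS.left_ne_right _ _ _ _).symm])
              ((((hX (by simp)).const_mul _).mul (hX (by simp))).mul (hX (by simp)))
    · calc _ = ∫ ω, X (p i a) ω * (c i a * c i' a' * X (q i a) ω * X (p i' a') ω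
              * X (q i' a') ω) ∂P := by congr 1; funext ω; ring
        _ = 0 := hind.integral_mul_eq_zero_of_notMem hm (h0 _) (T := {q i a, p i' a', q i' a'})
              (by simp [hp, hS.left_ne_right])
              ((((hX (by simp)).const_mul _).mul (hX (by simp))).mul (hX (by simp)))
  · calc _ = ∫ ω, X (w i' b') ω * (c i a * X (p i a) ω * X (q i a) ω) ∂P := by
          congr 1; funext ω; ring
      _ = 0 := hind.integral_mul_eq_zero_of_notMem hm (h0 _) (T := {p i a, q i a})
              (by simp [(hS.left_ne_linear _ _ _ _).symm, (hS.right_ne_linear _ _ _ _).symm])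
              (((hX (by simp)).const_mul _).mul (hX (by simp)))
  · calc _ = ∫ ω, X (w i b) ω * (c i' a' * X (p i' a') ω * X (q i' a') ω) ∂P := by
          congr 1; funext ω; ring
      _ = 0 := hind.integral_mul_eq_zero_of_notMem hm (h0 _) (T := {p i' a', q i' a'})
              (by simp [(hS.left_ne_linear _ _ _ _).symm, (hS.right_ne_linear _ _ _ _).symm])
              (((hX (by simp)).const_mul _).mul (hX (by simp)))
  · exact hind.integral_mul_eq_zero_of_notMem hm (h0 _) (T := {w i' b'})
      (fun h => hii' (hS.eq_of_linear_eq i i' b b' h)) (hX rfl)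

lemma memLp_sum_noiseTerm [Fintype A] [Fintype B] (hS : SeparatedMonomials p q w)
    (hind : iIndepFun X P) (hL2 : ∀ j, MemLp (X j) 2 P) (i : κ) :
    MemLp (fun ω => ∑ x, noiseTerm X c p q w i x ω) 2 P :=
  memLp_finsetSum _ fun x _ => hS.memLp_noiseTerm hind hL2 i x

theorem covariance_sum_noiseTerm_eq_zero [IsProbabilityMeasure P] [Fintype A] [Fintype B]
    (hS : SeparatedMonomials p q w) (hind : iIndepFun X P) (hm : ∀ j, Measurable (X j))
    (hL2 : ∀ j, MemLp (X j) 2 P) (h0 : ∀ j, ∫ ω, X j ω ∂P = 0) {i i' : κ} (hii' : i ≠ i') :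
    cov[fun ω => ∑ x, noiseTerm X c p q w i x ω, fun ω => ∑ y, noiseTerm X c p q w i' y ω; P]
      = 0 := by
  rw [covariance_fun_sum_fun_sum (hS.memLp_noiseTerm hind hL2 i) (hS.memLp_noiseTerm hind hL2 i')]
  refine Finset.sum_eq_zero fun x _ => Finset.sum_eq_zero fun y _ => ?_
  rw [covariance_eq_sub (hS.memLp_noiseTerm hind hL2 i x) (hS.memLp_noiseTerm hind hL2 i' y)]
  simp only [Pi.mul_apply, hS.integral_noiseTerm_mul_noiseTerm hind hm h0 hii',
    hS.integral_noiseTerm hind hm h0, mul_zero, sub_zero]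

end SeparatedMonomials

end NoiseTerms

lemma nconv_add_right {Ω : Type*} {n : ℕ} (a b b' : Fin n → Ω → ℝ) (i : Fin n) (ω : Ω) :
    nconv a (fun j ω' => b j ω' + b' j ω') i ω = nconv a b i ω + nconv a b' i ω := by
  simp only [nconv, mul_add, Finset.sum_add_distrib]

lemma sum_sign_mul_eq_mul_nconv {Ω : Type*} {n : ℕ} (σ : ℝ) (a b : Fin n → Ω → ℝ) (i : Fin n)
    (ω : Ω) : ∑ j : Fin n, (if (j : ℕ) ≤ (i : ℕ) then 1 else -1) * σ * (a (i - j) ω * b j ω)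
      = σ * nconv a b i ω := by
  simp only [nconv, Finset.mul_sum]
  exact Finset.sum_congr rfl fun j _ => by ring

namespace Kyber

variable {Ω : Type*} {k n : ℕ}

abbrev Index (k n : ℕ) := (Fin 5 × Fin k × Fin n) ⊕ (Fin 2 × Fin n)

def vars (s e r e1 cu : Fin k → Fin n → Ω → ℝ) (e2 cv : Fin n → Ω → ℝ) : Index k n → Ω → ℝ :=
  Sum.elim (fun x : Fin 5 × Fin k × Fin n => ![s, e, r, e1, cu] x.1 x.2.1 x.2.2)
    (fun x : Fin 2 × Fin n => ![e2, cv] x.1 x.2)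

/- The bilinear term `(m, t, j)` of coefficient `i` is `± X_{left} · X_{right}`, where
`m = 0, 1, 2` selects the product `e_t · r_t`, `s_t · e1_t`, `s_t · cu_t` (variable tags
`0, …, 4` of `Index` being `s, e, r, e1, cu`). -/
def leftIndex (i : Fin n) : Fin 3 × Fin k × Fin n → Index k n
  | (m, t, j) => .inl (![1, 0, 0] m, t, i - j)

def rightIndex (_ : Fin n) : Fin 3 × Fin k × Fin n → Index k n
  | (m, t, j) => .inl (![2, 3, 4] m, t, j)

def linearIndex (i : Fin n) (b : Fin 2) : Index k n := .inr (b, i)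

def coeff (i : Fin n) : Fin 3 × Fin k × Fin n → ℝ
  | (m, _, j) => (if (j : ℕ) ≤ (i : ℕ) then 1 else -1) * ![1, -1, -1] m

lemma forall_vars {Q : (Ω → ℝ) → Prop} {s e r e1 cu : Fin k → Fin n → Ω → ℝ}
    {e2 cv : Fin n → Ω → ℝ}
    (h : ∀ t j, Q (s t j) ∧ Q (e t j) ∧ Q (r t j) ∧ Q (e1 t j) ∧ Q (cu t j))
    (h' : ∀ j, Q (e2 j) ∧ Q (cv j)) (x : Index k n) : Q (vars s e r e1 cu e2 cv x) := by
  rcases x with ⟨m, t, j⟩ | ⟨m, j⟩ <;> fin_cases m <;> simp [vars, h, h']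

lemma separatedMonomials [NeZero n] :
    SeparatedMonomials (leftIndex (k := k) (n := n)) rightIndex linearIndex where
  left_ne_right := by
    rintro i i' ⟨m, t, j⟩ ⟨m', t', j'⟩ h
    simp only [leftIndex, rightIndex, Sum.inl.injEq, Prod.mk.injEq] at h
    fin_cases m <;> fin_cases m' <;> simp at h
  left_ne_linear := by simp [leftIndex, linearIndex]
  right_ne_linear := by simp [rightIndex, linearIndex]
  eq_of_left_eq_of_right_eq := by
    rintro i i' ⟨m, t, j⟩ ⟨m', t', j'⟩ hl hr
    simp only [leftIndex, rightIndex, Sum.inl.injEq, Prod.mk.injEq] at hl hr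
    rw [hr.2.2] at hl
    exact sub_left_inj.mp hl.2.2
  eq_of_linear_eq := by simp [linearIndex]

lemma kyberNoise_eq_sum_noiseTerm (s e r e1 cu : Fin k → Fin n → Ω → ℝ) (e2 cv : Fin n → Ω → ℝ)
    (i : Fin n) : kyberNoise s e r e1 cu e2 cv i = fun ω =>
      ∑ x, noiseTerm (vars s e r e1 cu e2 cv) coeff leftIndex rightIndex linearIndex i x ω := by
  funext ω
  simp only [kyberNoise, nconv_add_right, Finset.sum_add_distrib, Fintype.sum_sum_type,
    Fintype.sum_prod_type, Fin.sum_univ_three, Fin.sum_univ_two, noiseTerm, coeff, leftIndex,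
    rightIndex, linearIndex, vars, Sum.elim_inl, Sum.elim_inr, Matrix.cons_val,
    sum_sign_mul_eq_mul_nconv, ← Finset.mul_sum]
  ring

end Kyber

theorem kyberNoise_uncorrelated_general
    {Ω : Type*} [MeasurableSpace Ω] (P : Measure Ω) [IsProbabilityMeasure P]
    (n k : ℕ) (hn : 0 < n)
    (s e r e1 cu : Fin k → Fin n → Ω → ℝ) (e2 cv : Fin n → Ω → ℝ)
    (hmeas : ∀ t j, Measurable (s t j) ∧ Measurable (e t j) ∧ Measurable (r t j) ∧
      Measurable (e1 t j) ∧ Measurable (cu t j))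
    (hmeas' : ∀ j, Measurable (e2 j) ∧ Measurable (cv j))
    (hL2 : ∀ t j, MemLp (s t j) 2 P ∧ MemLp (e t j) 2 P ∧ MemLp (r t j) 2 P ∧
      MemLp (e1 t j) 2 P ∧ MemLp (cu t j) 2 P)
    (hL2' : ∀ j, MemLp (e2 j) 2 P ∧ MemLp (cv j) 2 P)
    (hmean : ∀ t j, (∫ ω, s t j ω ∂P) = 0 ∧ (∫ ω, e t j ω ∂P) = 0 ∧
      (∫ ω, r t j ω ∂P) = 0 ∧ (∫ ω, e1 t j ω ∂P) = 0 ∧ (∫ ω, cu t j ω ∂P) = 0)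
    (hmean' : ∀ j, (∫ ω, e2 j ω ∂P) = 0 ∧ (∫ ω, cv j ω ∂P) = 0)
    (hindep : iIndepFun
      (Sum.elim (fun x : Fin 5 × Fin k × Fin n => ![s, e, r, e1, cu] x.1 x.2.1 x.2.2)
        (fun x : Fin 2 × Fin n => ![e2, cv] x.1 x.2)) P)
    (i i' : Fin n) (hii' : i ≠ i') :
    (∫ ω, kyberNoise s e r e1 cu e2 cv i ω * kyberNoise s e r e1 cu e2 cv i' ω ∂P)
      - (∫ ω, kyberNoise s e r e1 cu e2 cv i ω ∂P)
        * (∫ ω, kyberNoise s e r e1 cu e2 cv i' ω ∂P) = 0 := by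
  have : NeZero n := ⟨hn.ne'⟩
  have hind : iIndepFun (Kyber.vars s e r e1 cu e2 cv) P := hindep
  have hm := Kyber.forall_vars (Q := Measurable) hmeas hmeas'
  have hX2 := Kyber.forall_vars (Q := fun f => MemLp f 2 P) hL2 hL2'
  have hX0 := Kyber.forall_vars (Q := fun f => ∫ ω, f ω ∂P = 0) hmean hmean'
  have hS := Kyber.separatedMonomials (k := k) (n := n)
  have hN := Kyber.kyberNoise_eq_sum_noiseTerm s e r e1 cu e2 cv
  have hN2 : ∀ j, MemLp (kyberNoise s e r e1 cu e2 cv j) 2 P := fun j => by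
    rw [hN]; exact hS.memLp_sum_noiseTerm hind hX2 j
  calc _ = cov[kyberNoise s e r e1 cu e2 cv i, kyberNoise s e r e1 cu e2 cv i'; P] :=
        (covariance_eq_sub (hN2 i) (hN2 i')).symm
    _ = 0 := by
      rw [hN, hN]
      exact hS.covariance_sum_noiseTerm_eq_zero hind hm hX2 hX0 hii'

/-- Distinct coefficients of the Kyber decoding noise are uncorrelated:
`Cov(n_{e,i}, n_{e,i'}) = E[n_{e,i} n_{e,i'}] − E[n_{e,i}]·E[n_{e,i'}] = 0` for `i ≠ i'`. -/
theorem kyberNoise_uncorrelated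
    {Ω : Type*} [MeasurableSpace Ω] (P : Measure Ω) [IsProbabilityMeasure P]
    (n k : ℕ) (hn : 0 < n) (hk : 0 < k)
    (s e r e1 cu : Fin k → Fin n → Ω → ℝ) (e2 cv : Fin n → Ω → ℝ)
    (hmeas : ∀ t j, Measurable (s t j) ∧ Measurable (e t j) ∧ Measurable (r t j) ∧
      Measurable (e1 t j) ∧ Measurable (cu t j))
    (hmeas' : ∀ j, Measurable (e2 j) ∧ Measurable (cv j))
    (hL2 : ∀ t j, MemLp (s t j) 2 P ∧ MemLp (e t j) 2 P ∧ MemLp (r t j) 2 P ∧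
      MemLp (e1 t j) 2 P ∧ MemLp (cu t j) 2 P)
    (hL2' : ∀ j, MemLp (e2 j) 2 P ∧ MemLp (cv j) 2 P)
    (hmean : ∀ t j, (∫ ω, s t j ω ∂P) = 0 ∧ (∫ ω, e t j ω ∂P) = 0 ∧
      (∫ ω, r t j ω ∂P) = 0 ∧ (∫ ω, e1 t j ω ∂P) = 0 ∧ (∫ ω, cu t j ω ∂P) = 0)
    (hmean' : ∀ j, (∫ ω, e2 j ω ∂P) = 0 ∧ (∫ ω, cv j ω ∂P) = 0)
    (hindep : iIndepFun
      (Sum.elim (fun x : Fin 5 × Fin k × Fin n => ![s, e, r, e1, cu] x.1 x.2.1 x.2.2)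
        (fun x : Fin 2 × Fin n => ![e2, cv] x.1 x.2)) P)
    (i i' : Fin n) (hii' : i ≠ i') :
    (∫ ω, kyberNoise s e r e1 cu e2 cv i ω * kyberNoise s e r e1 cu e2 cv i' ω ∂P)
      - (∫ ω, kyberNoise s e r e1 cu e2 cv i ω ∂P)
        * (∫ ω, kyberNoise s e r e1 cu e2 cv i' ω ∂P) = 0 :=
  kyberNoise_uncorrelated_general P n k hn s e r e1 cu e2 cv hmeas hmeas' hL2 hL2' hmean hmean'
    hindep i i' hii'
end

section
/- Let ℓ ≥ 1, σ > 0, and let X = (X_1,…,X_ℓ) be a random vector whose law is the ℓ-fold product of the Gaussian measure N(0,σ²) on ℝ (i.e., the coordinates are i.i.d. centered Gaussians with variance σ²). Then for all μ, μ' ∈ ℝ^ℓ with ‖μ‖ ≤ ‖μ'‖ (Euclidean norms) and every z ≥ 0, P(‖X + μ'‖ ≤ z) ≤ P(‖X + μ‖ ≤ z). -/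
/-!
The event `‖X + μ‖ ≤ z` is `X ∈ closedBall (-μ) z`, and the law of `X` has a density on Euclidean
space that is a nonincreasing function of the norm. For such a density, balls around `a` and `b`
with `‖a‖ ≤ ‖b‖` are compared by reflecting across the perpendicular bisector of `a` and `b`: the
reflection preserves Lebesgue measure, maps `closedBall b r \ closedBall a r` into
`closedBall a r \ closedBall b r`, and, since the origin lies on `a`'s side, does not increase the
norm of the points it moves.
-/

open MeasureTheory ProbabilityTheory Metric Set
open scoped ENNReal NNReal Real RealInnerProductSpace

namespace MeasureTheory

theorem withDensity_le_of_mapsTo_diff {α : Type*} [MeasurableSpace α] {μ : Measure α}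
    {f : α → ℝ≥0∞} {R : α → α} {A B : Set α} (hR : MeasurePreserving R μ μ)
    (hf : Measurable f) (hA : MeasurableSet A) (hB : MeasurableSet B)
    (hmaps : MapsTo R (B \ A) (A \ B)) (hle : ∀ x ∈ B \ A, f x ≤ f (R x)) :
    μ.withDensity f B ≤ μ.withDensity f A := by
  have hdiff : μ.withDensity f (B \ A) ≤ μ.withDensity f (A \ B) :=
    calc μ.withDensity f (B \ A) = ∫⁻ x in B \ A, f x ∂μ := withDensity_apply f (hB.diff hA)
      _ ≤ ∫⁻ x in B \ A, f (R x) ∂μ := setLIntegral_mono (hf.comp hR.measurable) hle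
      _ ≤ ∫⁻ x in R ⁻¹' (A \ B), f (R x) ∂μ := lintegral_mono_set hmaps.subset_preimage
      _ = ∫⁻ x in A \ B, f x ∂μ := hR.setLIntegral_comp_preimage (hA.diff hB) hf
      _ ≤ μ.withDensity f (A \ B) := withDensity_apply_le f _
  calc μ.withDensity f B = μ.withDensity f (B ∩ A) + μ.withDensity f (B \ A) :=
        (measure_inter_add_sdiff B hA).symm
    _ ≤ μ.withDensity f (A ∩ B) + μ.withDensity f (A \ B) := by
        rw [inter_comm]
        gcongr
    _ = μ.withDensity f A := measure_inter_add_sdiff A hB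

theorem lintegral_fin_nat_prod_eq_prod {n : ℕ} {X : Fin n → Type*}
    {mX : ∀ i, MeasurableSpace (X i)} {μ : (i : Fin n) → Measure (X i)} [∀ i, SigmaFinite (μ i)]
    {f : (i : Fin n) → X i → ℝ≥0∞} (hf : ∀ i, Measurable (f i)) :
    ∫⁻ x, ∏ i, f i (x i) ∂Measure.pi μ = ∏ i, ∫⁻ x, f i x ∂μ i := by
  induction n with
  | zero => simp
  | succ n ih =>
    have hsplit := (measurePreserving_piFinSuccAbove μ 0).symm
    calc ∫⁻ x, ∏ i, f i (x i) ∂Measure.pi μ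
        = ∫⁻ y, f 0 y.1 * ∏ j : Fin n, f (Fin.succAbove 0 j) (y.2 j)
            ∂(μ 0).prod (Measure.pi fun j ↦ μ (Fin.succAbove 0 j)) := by
          rw [← hsplit.lintegral_comp_emb (MeasurableEquiv.measurableEmbedding _)]
          refine lintegral_congr fun y ↦ ?_
          rw [Fin.prod_univ_succAbove _ 0]
          simp only [MeasurableEquiv.piFinSuccAbove_symm_apply, Fin.insertNthEquiv,
            Equiv.coe_fn_mk, Fin.insertNth_apply_same, Fin.insertNth_apply_succAbove]
      _ = (∫⁻ x, f 0 x ∂μ 0) *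
            ∏ j : Fin n, ∫⁻ x, f (Fin.succAbove 0 j) x ∂μ (Fin.succAbove 0 j) := by
          rw [← ih fun j ↦ hf _]
          exact lintegral_prod_mul (hf 0).aemeasurable
            (Finset.measurable_prod _ fun j _ ↦ (hf _).comp (measurable_pi_apply j)).aemeasurable
      _ = ∏ i, ∫⁻ x, f i x ∂μ i := (Fin.prod_univ_succAbove (fun i ↦ ∫⁻ x, f i x ∂μ i) 0).symm

theorem lintegral_fintype_prod_eq_prod {ι : Type*} [Fintype ι] {X : ι → Type*}
    {mX : ∀ i, MeasurableSpace (X i)} {μ : (i : ι) → Measure (X i)} [∀ i, SigmaFinite (μ i)]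
    {f : (i : ι) → X i → ℝ≥0∞} (hf : ∀ i, Measurable (f i)) :
    ∫⁻ x, ∏ i, f i (x i) ∂Measure.pi μ = ∏ i, ∫⁻ x, f i x ∂μ i := by
  let e := (Fintype.equivFin ι).symm
  rw [← (measurePreserving_piCongrLeft _ e).lintegral_comp_emb
    (MeasurableEquiv.measurableEmbedding _)]
  simp_rw [← e.prod_comp, MeasurableEquiv.coe_piCongrLeft, Equiv.piCongrLeft_apply_apply]
  exact lintegral_fin_nat_prod_eq_prod fun i ↦ hf (e i)

theorem Measure.pi_withDensity {ι : Type*} [Fintype ι] {X : ι → Type*}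
    {mX : ∀ i, MeasurableSpace (X i)} {μ : (i : ι) → Measure (X i)} [∀ i, SigmaFinite (μ i)]
    {f : (i : ι) → X i → ℝ≥0∞} (hf : ∀ i, Measurable (f i))
    [∀ i, SigmaFinite ((μ i).withDensity (f i))] :
    Measure.pi (fun i ↦ (μ i).withDensity (f i)) =
      (Measure.pi μ).withDensity fun x ↦ ∏ i, f i (x i) := by
  refine Measure.pi_eq (μ := fun i ↦ (μ i).withDensity (f i)) fun s hs ↦ ?_
  rw [withDensity_apply _ (.univ_pi hs), Measure.restrict_pi_pi,
    lintegral_fintype_prod_eq_prod (μ := fun i ↦ (μ i).restrict (s i)) hf]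
  exact Finset.prod_congr rfl fun i _ ↦ (withDensity_apply _ (hs i)).symm

end MeasureTheory

section BisectorReflection

variable {E : Type*} [NormedAddCommGroup E] [InnerProductSpace ℝ E]

theorem norm_sub_sq_sub_norm_sub_sq (a b x : E) :
    ‖x - a‖ ^ 2 - ‖x - b‖ ^ 2 = 2 * ⟪x - midpoint ℝ a b, b - a⟫ := by
  rw [midpoint_eq_smul_add, invOf_eq_inv, norm_sub_sq_real, norm_sub_sq_real]
  simp only [inner_sub_left, inner_sub_right, inner_smul_left, inner_add_left,
    real_inner_self_eq_norm_sq, real_inner_comm a b, RCLike.conj_to_real]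
  ring

noncomputable def bisectorReflection (a b x : E) : E :=
  (ℝ ∙ (b - a))ᗮ.reflection (x - midpoint ℝ a b) + midpoint ℝ a b

variable (a b : E)

theorem bisectorReflection_eq (x : E) : bisectorReflection a b x =
    x - (2 * (⟪b - a, x - midpoint ℝ a b⟫ / ‖b - a‖ ^ 2)) • (b - a) := by
  rw [bisectorReflection, Submodule.reflection_orthogonal_apply,
    Submodule.reflection_singleton_apply, mul_smul]
  simp only [RCLike.ofReal_real_eq_id, id]
  module

theorem bisectorReflection_involutive : Function.Involutive (bisectorReflection a b) := by
  intro x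
  simp [bisectorReflection]

theorem dist_bisectorReflection (x y : E) :
    dist (bisectorReflection a b x) (bisectorReflection a b y) = dist x y := by
  simp only [bisectorReflection, dist_eq_norm, add_sub_add_right_eq_sub, ← map_sub,
    LinearIsometryEquiv.norm_map, sub_sub_sub_cancel_right]

theorem bisectorReflection_left : bisectorReflection a b a = b := by
  have : a - midpoint ℝ a b = -((⅟2 : ℝ) • (b - a)) := by
    rw [left_sub_midpoint, ← smul_neg, neg_sub]
  simp only [bisectorReflection, this, map_neg, map_smul,
    Submodule.reflection_orthogonalComplement_singleton_eq_neg, smul_neg, neg_neg]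
  rw [← right_sub_midpoint, sub_add_cancel]

theorem bisectorReflection_right : bisectorReflection a b b = a := by
  simpa only [bisectorReflection_left] using bisectorReflection_involutive a b a

theorem dist_bisectorReflection_left (x : E) : dist (bisectorReflection a b x) a = dist x b := by
  simpa only [bisectorReflection_right] using dist_bisectorReflection a b x b

theorem dist_bisectorReflection_right (x : E) : dist (bisectorReflection a b x) b = dist x a := by
  simpa only [bisectorReflection_left] using dist_bisectorReflection a b x a

theorem measurePreserving_bisectorReflection [FiniteDimensional ℝ E] [MeasurableSpace E]
    [BorelSpace E] : MeasurePreserving (bisectorReflection a b) :=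
  (measurePreserving_add_right volume _).comp
    ((LinearIsometryEquiv.measurePreserving _).comp (measurePreserving_sub_right volume _))

variable {a b}

theorem norm_bisectorReflection_le (hab : ‖a‖ ≤ ‖b‖) {x : E} (hx : dist x b ≤ dist x a) :
    ‖bisectorReflection a b x‖ ≤ ‖x‖ := by
  have hy : 0 ≤ ⟪x - midpoint ℝ a b, b - a⟫ := by
    have := norm_sub_sq_sub_norm_sub_sq a b x
    rw [dist_eq_norm, dist_eq_norm] at hx
    nlinarith [norm_nonneg (x - b)]
  have hc : 0 ≤ ⟪midpoint ℝ a b, b - a⟫ := by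
    have := norm_sub_sq_sub_norm_sub_sq a b 0
    simp only [zero_sub, norm_neg, inner_neg_left] at this
    nlinarith [norm_nonneg a]
  set t := 2 * (⟪b - a, x - midpoint ℝ a b⟫ / ‖b - a‖ ^ 2)
  have ht : 0 ≤ t := by
    rw [real_inner_comm] at hy
    positivity
  have htd : t * ‖b - a‖ ^ 2 ≤ 2 * ⟪x - midpoint ℝ a b, b - a⟫ := by
    rcases eq_or_ne (b - a) 0 with hd | hd
    · simp [hd]
    · refine le_of_eq ?_
      simp only [t, real_inner_comm (b - a)]
      field_simp
  have hsplit : ⟪x, b - a⟫ = ⟪x - midpoint ℝ a b, b - a⟫ + ⟪midpoint ℝ a b, b - a⟫ := by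
    rw [← inner_add_left, sub_add_cancel]
  rw [← sq_le_sq₀ (norm_nonneg _) (norm_nonneg _), bisectorReflection_eq, norm_sub_sq_real,
    real_inner_smul_right, norm_smul, mul_pow, Real.norm_eq_abs, sq_abs]
  nlinarith [mul_nonneg ht hc, mul_le_mul_of_nonneg_left htd ht]

theorem withDensity_closedBall_le_of_norm_le [FiniteDimensional ℝ E] [MeasurableSpace E]
    [BorelSpace E] {f : E → ℝ≥0∞} (hf : Measurable f)
    (hf_anti : ∀ ⦃x y : E⦄, ‖x‖ ≤ ‖y‖ → f y ≤ f x) (hab : ‖a‖ ≤ ‖b‖) (r : ℝ) :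
    volume.withDensity f (closedBall b r) ≤ volume.withDensity f (closedBall a r) := by
  refine withDensity_le_of_mapsTo_diff (measurePreserving_bisectorReflection a b) hf
    measurableSet_closedBall measurableSet_closedBall (fun x ⟨hxb, hxa⟩ ↦ ?_)
    (fun x ⟨hxb, hxa⟩ ↦ hf_anti (norm_bisectorReflection_le hab ?_))
  · simp_all [dist_bisectorReflection_left, dist_bisectorReflection_right]
  · simp only [mem_closedBall, not_le] at hxb hxa
    linarith

end BisectorReflection

section GaussianDensity

variable {ι : Type*} [Fintype ι]

noncomputable def gaussianPDFEuclidean (v : ℝ≥0) (x : EuclideanSpace ℝ ι) : ℝ≥0∞ :=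
  ENNReal.ofReal ((√(2 * π * v))⁻¹ ^ Fintype.card ι * Real.exp (-‖x‖ ^ 2 / (2 * v)))

theorem measurable_gaussianPDFEuclidean (v : ℝ≥0) :
    Measurable (gaussianPDFEuclidean (ι := ι) v) := by
  unfold gaussianPDFEuclidean
  fun_prop

theorem gaussianPDFEuclidean_le_of_norm_le (v : ℝ≥0) {x y : EuclideanSpace ℝ ι}
    (h : ‖x‖ ≤ ‖y‖) : gaussianPDFEuclidean v y ≤ gaussianPDFEuclidean v x := by
  unfold gaussianPDFEuclidean
  gcongr

theorem prod_gaussianPDF_eq_gaussianPDFEuclidean (v : ℝ≥0) (x : ι → ℝ) :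
    ∏ i, gaussianPDF 0 v (x i) = gaussianPDFEuclidean v (WithLp.toLp 2 x) := by
  simp only [gaussianPDF, gaussianPDFReal, gaussianPDFEuclidean, EuclideanSpace.real_norm_sq_eq]
  rw [← ENNReal.ofReal_prod_of_nonneg fun i _ ↦ by positivity, Finset.prod_mul_distrib,
    Finset.prod_const, ← Real.exp_sum, Finset.card_univ, ← Finset.sum_div]
  simp

theorem pi_gaussianReal_preimage_toLp {v : ℝ≥0} (hv : v ≠ 0)
    {s : Set (EuclideanSpace ℝ ι)} (hs : MeasurableSet s) :
    Measure.pi (fun _ : ι ↦ gaussianReal 0 v) (WithLp.toLp 2 ⁻¹' s) =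
      volume.withDensity (gaussianPDFEuclidean v) s := by
  have : SigmaFinite ((volume : Measure ℝ).withDensity (gaussianPDF 0 v)) := by
    rw [← gaussianReal_of_var_ne_zero 0 hv]
    infer_instance
  simp_rw [gaussianReal_of_var_ne_zero 0 hv]
  rw [Measure.pi_withDensity fun _ ↦ measurable_gaussianPDF 0 v, ← volume_pi,
    withDensity_apply _ (hs.preimage (PiLp.volume_preserving_toLp ι).measurable),
    withDensity_apply _ hs]
  simp_rw [prod_gaussianPDF_eq_gaussianPDFEuclidean]
  exact (PiLp.volume_preserving_toLp ι).setLIntegral_comp_preimage hs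
    (measurable_gaussianPDFEuclidean v)

end GaussianDensity

theorem gaussian_shifted_ball_prob_anti_general {ℓ : ℕ}
    (σ : ℝ) (hσ : 0 < σ)
    (μ μ' : Fin ℓ → ℝ)
    (hμ : Real.sqrt (∑ i, (μ i) ^ 2) ≤ Real.sqrt (∑ i, (μ' i) ^ 2))
    (z : ℝ) :
    (Measure.pi fun _ : Fin ℓ => gaussianReal 0 ⟨σ ^ 2, sq_nonneg σ⟩)
        {x : Fin ℓ → ℝ | Real.sqrt (∑ i, (x i + μ' i) ^ 2) ≤ z} ≤
      (Measure.pi fun _ : Fin ℓ => gaussianReal 0 ⟨σ ^ 2, sq_nonneg σ⟩)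
        {x : Fin ℓ → ℝ | Real.sqrt (∑ i, (x i + μ i) ^ 2) ≤ z} := by
  have hv : (⟨σ ^ 2, sq_nonneg σ⟩ : ℝ≥0) ≠ 0 := fun h ↦ (pow_pos hσ 2).ne' (congrArg NNReal.toReal h)
  have hball (m : Fin ℓ → ℝ) : {x : Fin ℓ → ℝ | √(∑ i, (x i + m i) ^ 2) ≤ z} =
      WithLp.toLp 2 ⁻¹' closedBall (WithLp.toLp 2 (-m)) z := by
    ext x
    simp [EuclideanSpace.dist_eq, Real.dist_eq, sq_abs]
  have hnorm (m : Fin ℓ → ℝ) : ‖WithLp.toLp 2 (-m)‖ = √(∑ i, m i ^ 2) := by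
    simp [EuclideanSpace.norm_eq]
  rw [hball, hball, pi_gaussianReal_preimage_toLp hv measurableSet_closedBall,
    pi_gaussianReal_preimage_toLp hv measurableSet_closedBall]
  refine withDensity_closedBall_le_of_norm_le (measurable_gaussianPDFEuclidean _)
    (fun _ _ ↦ gaussianPDFEuclidean_le_of_norm_le _) ?_ z
  rwa [hnorm, hnorm]

/-- For a random vector `X` with i.i.d. `N(0,σ²)` coordinates (law given by the `ℓ`-fold
product of the Gaussian measure), the probability `P(‖X + μ‖ ≤ z)` (Euclidean norm) is
nonincreasing in `‖μ‖`: if `‖μ‖ ≤ ‖μ'‖` then `P(‖X + μ'‖ ≤ z) ≤ P(‖X + μ‖ ≤ z)`. -/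
theorem gaussian_shifted_ball_prob_anti {ℓ : ℕ} (hℓ : 1 ≤ ℓ)
    (σ : ℝ) (hσ : 0 < σ)
    (μ μ' : Fin ℓ → ℝ)
    (hμ : Real.sqrt (∑ i, (μ i) ^ 2) ≤ Real.sqrt (∑ i, (μ' i) ^ 2))
    (z : ℝ) (hz : 0 ≤ z) :
    (Measure.pi fun _ : Fin ℓ => gaussianReal 0 ⟨σ ^ 2, sq_nonneg σ⟩)
        {x : Fin ℓ → ℝ | Real.sqrt (∑ i, (x i + μ' i) ^ 2) ≤ z} ≤
      (Measure.pi fun _ : Fin ℓ => gaussianReal 0 ⟨σ ^ 2, sq_nonneg σ⟩)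
        {x : Fin ℓ → ℝ | Real.sqrt (∑ i, (x i + μ i) ^ 2) ≤ z} :=
  gaussian_shifted_ball_prob_anti_general σ hσ μ μ' hμ z
end

section
/- Let ℓ ≥ 1, σ > 0, and let a be a nonnegative integer. Let X = (X_1,…,X_ℓ) be a random vector whose coordinates are i.i.d. centered Gaussians with variance σ², and let Y = (Y_1,…,Y_ℓ) be independent of X with coordinates i.i.d. uniform on the integer set {−a, −a+1, …, a}. Then for every z ≥ 0, P(‖X + Y‖ ≤ z) ≥ P(‖X + a·𝟙‖ ≤ z), where 𝟙 = (1,…,1) ∈ ℝ^ℓ and ‖·‖ is the Euclidean norm. -/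
open MeasureTheory ProbabilityTheory

/-- The uniform distribution on the integer set `{-a, -a+1, …, a}`, viewed as a
probability measure on `ℝ`. -/
noncomputable def uniformIntSeg (a : ℕ) : Measure ℝ :=
  (PMF.uniformOfFinset ((Finset.Icc (-(a : ℤ)) (a : ℤ)).image fun m : ℤ => (m : ℝ))
    ((Finset.nonempty_Icc.mpr (by omega : -(a : ℤ) ≤ (a : ℤ))).image _)).toMeasure

section GaussUnifAux
open MeasureTheory ProbabilityTheory Real Set NNReal

lemma pdf_shift_le (v : ℝ≥0) {x r : ℝ} (hr : 0 ≤ r) (hx : -r ≤ x) :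
    gaussianPDFReal 0 v (x + 2 * r) ≤ gaussianPDFReal 0 v x := by
  unfold gaussianPDFReal
  apply mul_le_mul_of_nonneg_left _ (by positivity)
  apply Real.exp_le_exp.mpr
  have hsq : (x - 0)^2 ≤ (x + 2*r - 0)^2 := by
    simp only [sub_zero]
    exact sq_le_sq' (by linarith) (by linarith)
  rcases eq_or_lt_of_le (show (0:ℝ) ≤ 2 * v by positivity) with h | h
  · rw [← h]; simp
  · exact (div_le_div_iff_of_pos_right h).mpr (by linarith)

lemma pdf_intInt (v : ℝ≥0) (a b : ℝ) :
    IntervalIntegrable (gaussianPDFReal 0 v) MeasureTheory.volume a b :=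
  (integrable_gaussianPDFReal 0 v).intervalIntegrable

lemma gauss_interval_mono (v : ℝ≥0) {r m m' : ℝ} (hr : 0 ≤ r) (hm : 0 ≤ m) (hmm : m ≤ m') :
    ∫ x in (m'-r)..(m'+r), gaussianPDFReal 0 v x ≤ ∫ x in (m-r)..(m+r), gaussianPDFReal 0 v x := by
  set φ := gaussianPDFReal 0 v with hφ
  have hX : (∫ x in (m+r)..(m'+r), φ x) = ∫ x in (m-r)..(m'-r), φ (x + 2*r) := by
    rw [intervalIntegral.integral_comp_add_right φ (2*r)]
    congr 1 <;> ring
  have hXY : (∫ x in (m+r)..(m'+r), φ x) ≤ ∫ x in (m-r)..(m'-r), φ x := by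
    rw [hX]
    apply intervalIntegral.integral_mono_on (by linarith)
    · exact ((integrable_gaussianPDFReal 0 v).comp_add_right (2*r)).intervalIntegrable
    · exact pdf_intInt v _ _
    · intro x hx
      exact pdf_shift_le v hr (by linarith [hx.1])
  have add1 := intervalIntegral.integral_add_adjacent_intervals
    (pdf_intInt v (m-r) (m+r)) (pdf_intInt v (m+r) (m'+r))
  have add2 := intervalIntegral.integral_add_adjacent_intervals
    (pdf_intInt v (m-r) (m'-r)) (pdf_intInt v (m'-r) (m'+r))
  rw [← add2] at add1
  linarith

lemma pdf_integral_reflect (v : ℝ≥0) (r m : ℝ) :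
    (∫ x in (-m-r)..(-m+r), gaussianPDFReal 0 v x) = ∫ x in (m-r)..(m+r), gaussianPDFReal 0 v x := by
  have : (∫ x in (m-r)..(m+r), gaussianPDFReal 0 v (-x)) = ∫ x in (-(m+r))..(-(m-r)), gaussianPDFReal 0 v x :=
    intervalIntegral.integral_comp_neg (gaussianPDFReal 0 v)
  have heven : ∀ x : ℝ, gaussianPDFReal 0 v (-x) = gaussianPDFReal 0 v x := by
    intro x; unfold gaussianPDFReal; norm_num
  simp only [heven] at this
  rw [show (-m-r : ℝ) = -(m+r) by ring, show (-m+r:ℝ) = -(m-r) by ring, ← this]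

lemma pdf_integral_abs (v : ℝ≥0) (r m : ℝ) :
    (∫ x in (m-r)..(m+r), gaussianPDFReal 0 v x)
      = ∫ x in (|m|-r)..(|m|+r), gaussianPDFReal 0 v x := by
  rcases abs_cases m with ⟨h, _⟩ | ⟨h, _⟩
  · rw [h]
  · rw [h, ← pdf_integral_reflect v r (-m)]; norm_num

lemma gauss_shift_mono (v : ℝ≥0) (hv : v ≠ 0) {r c d : ℝ} (hr : 0 ≤ r) (h : |c| ≤ |d|) :
    gaussianReal 0 v {u : ℝ | |u + d| ≤ r} ≤ gaussianReal 0 v {u : ℝ | |u + c| ≤ r} := by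
  have hset : ∀ t : ℝ, {u : ℝ | |u + t| ≤ r} = Set.Icc (-t - r) (-t + r) := by
    intro t; ext u; simp only [Set.mem_setOf_eq, Set.mem_Icc, abs_le]; constructor <;> intro h' <;>
      constructor <;> linarith [h'.1, h'.2]
  rw [hset, hset, gaussianReal_apply_eq_integral _ hv, gaussianReal_apply_eq_integral _ hv]
  apply ENNReal.ofReal_le_ofReal
  rw [MeasureTheory.integral_Icc_eq_integral_Ioc, MeasureTheory.integral_Icc_eq_integral_Ioc,
    ← intervalIntegral.integral_of_le (by linarith), ← intervalIntegral.integral_of_le (by linarith)]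
  calc (∫ x in (-d-r)..(-d+r), gaussianPDFReal 0 v x)
      = ∫ x in (|d|-r)..(|d|+r), gaussianPDFReal 0 v x := by
        rw [pdf_integral_abs v r (-d), abs_neg]
    _ ≤ ∫ x in (|c|-r)..(|c|+r), gaussianPDFReal 0 v x :=
        gauss_interval_mono v hr (abs_nonneg c) h
    _ = ∫ x in (-c-r)..(-c+r), gaussianPDFReal 0 v x := by
        rw [pdf_integral_abs v r (-c), abs_neg]

lemma gauss_sq_shift_mono (v : ℝ≥0) (hv : v ≠ 0) (R : ℝ) {c d : ℝ} (h : |c| ≤ |d|) :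
    gaussianReal 0 v {u : ℝ | (u + d)^2 ≤ R} ≤ gaussianReal 0 v {u : ℝ | (u + c)^2 ≤ R} := by
  rcases lt_or_ge R 0 with hR | hR
  · have : {u : ℝ | (u + d)^2 ≤ R} = ∅ := by
      ext u; simp only [Set.mem_setOf_eq, Set.mem_empty_iff_false, iff_false]
      nlinarith [sq_nonneg (u + d)]
    simp [this]
  · have hsq : ∀ t : ℝ, {u : ℝ | (u + t)^2 ≤ R} = {u : ℝ | |u + t| ≤ Real.sqrt R} := by
      intro t; ext u
      simp only [Set.mem_setOf_eq]
      rw [← Real.sqrt_sq_eq_abs, Real.sqrt_le_sqrt_iff hR]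
    rw [hsq, hsq]
    exact gauss_shift_mono v hv (Real.sqrt_nonneg R) h

lemma measurable_sumsq {ℓ : ℕ} (c : Fin ℓ → ℝ) (z2 : ℝ) :
    MeasurableSet {x : Fin ℓ → ℝ | ∑ i, (x i + c i)^2 ≤ z2} := by
  apply measurableSet_le _ measurable_const
  exact Finset.measurable_sum _ fun i _ => ((measurable_pi_apply i).add measurable_const).pow_const 2

lemma step_lemma (v : ℝ≥0) (hv : v ≠ 0) {ℓ : ℕ} (z2 : ℝ) (c d : Fin ℓ → ℝ) (i₀ : Fin ℓ)
    (hcd : ∀ i, i ≠ i₀ → c i = d i) (h : |c i₀| ≤ |d i₀|) :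
    Measure.pi (fun _ : Fin ℓ => gaussianReal 0 v) {x | ∑ i, (x i + d i)^2 ≤ z2}
      ≤ Measure.pi (fun _ : Fin ℓ => gaussianReal 0 v) {x | ∑ i, (x i + c i)^2 ≤ z2} := by
  set γ := gaussianReal 0 v
  set μ : Fin ℓ → Measure ℝ := fun _ => γ
  have key : ∀ e : Fin ℓ → ℝ, ∀ S : Set (Fin ℓ → ℝ), S = {x | ∑ i, (x i + e i)^2 ≤ z2} →
      Measure.pi μ S
        = (MeasureTheory.lmarginal μ (Finset.univ.erase i₀)
            (fun x => γ {u : ℝ | (u + e i₀)^2 ≤ z2 - ∑ i ∈ Finset.univ.erase i₀, (x i + e i)^2}))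
            (fun _ => 0) := by
    intro e S hS
    have hSm : MeasurableSet S := hS ▸ measurable_sumsq e z2
    have hind : Measure.pi μ S = ∫⁻ x, S.indicator (1 : (Fin ℓ → ℝ) → ENNReal) x ∂Measure.pi μ := by
      rw [MeasureTheory.lintegral_indicator_one hSm]
    rw [hind, MeasureTheory.lintegral_eq_lmarginal_univ (fun _ => 0),
      MeasureTheory.lmarginal_erase' _ (measurable_one.indicator hSm) (Finset.mem_univ i₀)]
    congr 1
    ext x
    have hsum : ∀ u : ℝ, ∑ i, (Function.update x i₀ u i + e i)^2
        = (∑ i ∈ Finset.univ.erase i₀, (x i + e i)^2) + (u + e i₀)^2 := by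
      intro u
      rw [← Finset.sum_erase_add _ _ (Finset.mem_univ i₀)]
      simp only [Function.update_self]
      congr 1
      apply Finset.sum_congr rfl
      intro i hi
      rw [Function.update_of_ne (Finset.ne_of_mem_erase hi)]
    calc (∫⁻ u, S.indicator (1 : (Fin ℓ → ℝ) → ENNReal) (Function.update x i₀ u) ∂γ)
        = ∫⁻ u, ({u : ℝ | (u + e i₀)^2 ≤ z2 - ∑ i ∈ Finset.univ.erase i₀, (x i + e i)^2}).indicator
            ((1 : ℝ → ENNReal)) u ∂γ := by
          apply lintegral_congr
          intro u
          rw [hS]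
          simp only [Set.indicator_apply, Set.mem_setOf_eq, hsum u]
          exact if_congr (by constructor <;> intro <;> linarith) rfl rfl
      _ = γ {u : ℝ | (u + e i₀)^2 ≤ z2 - ∑ i ∈ Finset.univ.erase i₀, (x i + e i)^2} := by
          apply MeasureTheory.lintegral_indicator_one
          apply measurableSet_le _ measurable_const
          exact (measurable_id.add_const _).pow_const 2
  rw [key d _ rfl, key c _ rfl]
  apply MeasureTheory.lmarginal_mono
  intro x
  dsimp only
  have hrest : ∑ i ∈ Finset.univ.erase i₀, (x i + c i)^2 = ∑ i ∈ Finset.univ.erase i₀, (x i + d i)^2 := by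
    apply Finset.sum_congr rfl
    intro i hi
    rw [hcd i (Finset.ne_of_mem_erase hi)]
  rw [hrest]
  exact gauss_sq_shift_mono v hv _ h

lemma replace_all (v : ℝ≥0) (hv : v ≠ 0) {ℓ : ℕ} (z2 : ℝ) (c d : Fin ℓ → ℝ)
    (h : ∀ i, |c i| ≤ |d i|) :
    Measure.pi (fun _ : Fin ℓ => gaussianReal 0 v) {x | ∑ i, (x i + d i)^2 ≤ z2}
      ≤ Measure.pi (fun _ : Fin ℓ => gaussianReal 0 v) {x | ∑ i, (x i + c i)^2 ≤ z2} := by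
  have H : ∀ s : Finset (Fin ℓ),
      Measure.pi (fun _ : Fin ℓ => gaussianReal 0 v) {x | ∑ i, (x i + d i)^2 ≤ z2}
        ≤ Measure.pi (fun _ : Fin ℓ => gaussianReal 0 v)
            {x | ∑ i, (x i + (if i ∈ s then c i else d i))^2 ≤ z2} := by
    intro s
    induction s using Finset.induction_on with
    | empty => simp
    | @insert a s ha ih =>
      refine le_trans ih (step_lemma v hv z2 _ _ a ?_ ?_)
      · intro i hi
        simp [Finset.mem_insert, hi]
      · simp only [Finset.mem_insert_self, if_pos, ha, if_neg]
        exact h a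
  have := H Finset.univ
  simpa using this

instance uniformIntSeg_prob (a : ℕ) : IsProbabilityMeasure (uniformIntSeg a) := by
  unfold uniformIntSeg; infer_instance

lemma uniformIntSeg_Icc (a : ℕ) : uniformIntSeg a {t : ℝ | |t| ≤ a} = 1 := by
  unfold uniformIntSeg
  rw [PMF.toMeasure_apply_eq_one_iff]
  · rw [PMF.support_uniformOfFinset]
    intro x hx
    simp only [Finset.coe_image, Set.mem_image, Finset.mem_coe, Finset.mem_Icc] at hx
    obtain ⟨m, ⟨hm1, hm2⟩, rfl⟩ := hx
    simp only [Set.mem_setOf_eq]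
    rw [abs_le]
    constructor
    · exact_mod_cast (by exact_mod_cast hm1 : (-(a:ℤ) : ℝ) ≤ (m : ℝ))
    · exact_mod_cast hm2
  · have : {t:ℝ | |t| ≤ (a:ℝ)} = Set.Icc (-(a:ℝ)) a := by ext t; simp [abs_le]
    rw [this]; exact measurableSet_Icc


end GaussUnifAux

/-- If `X` has i.i.d. `N(0,σ²)` coordinates and `Y`, independent of `X`, has i.i.d.
coordinates uniform on `{-a,…,a}`, then for every `z ≥ 0`,
`P(‖X + Y‖ ≤ z) ≥ P(‖X + a·𝟙‖ ≤ z)` (Euclidean norms). -/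
theorem gaussian_plus_uniform_ball_prob_ge {ℓ : ℕ} (hℓ : 1 ≤ ℓ)
    (σ : ℝ) (hσ : 0 < σ) (a : ℕ)
    {Ω : Type*} [MeasurableSpace Ω] (P : Measure Ω) [IsProbabilityMeasure P]
    (X Y : Ω → Fin ℓ → ℝ) (hXm : Measurable X) (hYm : Measurable Y)
    (hX : Measure.map X P = Measure.pi fun _ : Fin ℓ => gaussianReal 0 ⟨σ ^ 2, sq_nonneg σ⟩)
    (hY : Measure.map Y P = Measure.pi fun _ : Fin ℓ => uniformIntSeg a)
    (hindep : IndepFun X Y P)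
    (z : ℝ) (hz : 0 ≤ z) :
    P {ω | Real.sqrt (∑ i, (X ω i + (a : ℝ)) ^ 2) ≤ z} ≤
      P {ω | Real.sqrt (∑ i, (X ω i + Y ω i) ^ 2) ≤ z} := by
  set v : NNReal := ⟨σ ^ 2, sq_nonneg σ⟩ with hvdef
  have hv : v ≠ 0 := by
    intro hcon
    have : σ ^ 2 = 0 := congrArg NNReal.toReal hcon
    nlinarith
  set μ : Measure (Fin ℓ → ℝ) := Measure.pi fun _ : Fin ℓ => gaussianReal 0 v with hμ
  set ν : Measure (Fin ℓ → ℝ) := Measure.pi fun _ : Fin ℓ => uniformIntSeg a with hν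
  -- sqrt-to-square conversion
  have hsqrt : ∀ s : ℝ, 0 ≤ s → (Real.sqrt s ≤ z ↔ s ≤ z ^ 2) := by
    intro s hs
    rw [← Real.sqrt_le_sqrt_iff (sq_nonneg z), Real.sqrt_sq hz]
  have hsum_nonneg : ∀ (w : Fin ℓ → ℝ), (0:ℝ) ≤ ∑ i, (w i) ^ 2 :=
    fun w => Finset.sum_nonneg fun i _ => sq_nonneg _
  -- LHS
  have hSm := measurable_sumsq (fun _ : Fin ℓ => (a : ℝ)) (z ^ 2)
  have hLHS : P {ω | Real.sqrt (∑ i, (X ω i + (a : ℝ)) ^ 2) ≤ z}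
      = μ {x | ∑ i, (x i + (a : ℝ)) ^ 2 ≤ z ^ 2} := by
    rw [← hX, Measure.map_apply hXm hSm]
    congr 1
    ext ω
    simp only [Set.mem_setOf_eq, Set.mem_preimage]
    exact hsqrt _ (hsum_nonneg fun i => X ω i + a)
  -- RHS via product measure
  have hTm : MeasurableSet {p : (Fin ℓ → ℝ) × (Fin ℓ → ℝ) | ∑ i, (p.2 i + p.1 i) ^ 2 ≤ z ^ 2} := by
    apply measurableSet_le _ measurable_const
    exact Finset.measurable_sum _ fun i _ =>
      (((measurable_pi_apply i).comp measurable_snd).add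
        ((measurable_pi_apply i).comp measurable_fst)).pow_const 2
  have hmap : Measure.map (fun ω => (Y ω, X ω)) P = ν.prod μ := by
    rw [← hX, ← hY]
    exact (indepFun_iff_map_prod_eq_prod_map_map hYm.aemeasurable hXm.aemeasurable).mp hindep.symm
  have hRHS : P {ω | Real.sqrt (∑ i, (X ω i + Y ω i) ^ 2) ≤ z}
      = ∫⁻ y, μ {x | ∑ i, (x i + y i) ^ 2 ≤ z ^ 2} ∂ν := by
    have h1 : P {ω | Real.sqrt (∑ i, (X ω i + Y ω i) ^ 2) ≤ z}
        = Measure.map (fun ω => (Y ω, X ω)) P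
            {p : (Fin ℓ → ℝ) × (Fin ℓ → ℝ) | ∑ i, (p.2 i + p.1 i) ^ 2 ≤ z ^ 2} := by
      rw [Measure.map_apply (hYm.prodMk hXm) hTm]
      congr 1
      ext ω
      simp only [Set.mem_setOf_eq, Set.mem_preimage]
      exact hsqrt _ (hsum_nonneg fun i => X ω i + Y ω i)
    rw [h1, hmap, Measure.prod_apply hTm]
    rfl
  rw [hLHS, hRHS]
  -- a.e. bound on Y coordinates
  have hae : ∀ᵐ y ∂ν, ∀ i, |y i| ≤ (a : ℝ) := by
    have hIccm : MeasurableSet {t : ℝ | |t| ≤ (a:ℝ)} := by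
      have : {t : ℝ | |t| ≤ (a:ℝ)} = Set.Icc (-(a:ℝ)) a := by ext t; simp [abs_le]
      rw [this]; exact measurableSet_Icc
    have hset : {y : Fin ℓ → ℝ | ∀ i, |y i| ≤ (a : ℝ)}
        = Set.pi Set.univ (fun _ : Fin ℓ => {t : ℝ | |t| ≤ (a:ℝ)}) := by
      ext y; simp [Set.mem_pi]
    have h1 : ν {y : Fin ℓ → ℝ | ∀ i, |y i| ≤ (a : ℝ)} = 1 := by
      rw [hset, hν, Measure.pi_pi]
      simp [uniformIntSeg_Icc a]
    rw [ae_iff]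
    have : {y : Fin ℓ → ℝ | ¬ ∀ i, |y i| ≤ (a : ℝ)} = {y | ∀ i, |y i| ≤ (a : ℝ)}ᶜ := rfl
    rw [this, measure_compl (hset ▸ (MeasurableSet.univ_pi fun _ => hIccm)) (measure_ne_top _ _),
      h1]
    simp
  calc μ {x | ∑ i, (x i + (a : ℝ)) ^ 2 ≤ z ^ 2}
      = ∫⁻ _, μ {x | ∑ i, (x i + (a : ℝ)) ^ 2 ≤ z ^ 2} ∂ν := by
        rw [MeasureTheory.lintegral_const, measure_univ, mul_one]
    _ ≤ ∫⁻ y, μ {x | ∑ i, (x i + y i) ^ 2 ≤ z ^ 2} ∂ν := by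
        apply lintegral_mono_ae
        filter_upwards [hae] with y hy
        exact replace_all v hv (z ^ 2) y (fun _ => (a : ℝ)) fun i =>
          (hy i).trans (le_abs_self _)
end

section
/- Let ℓ ≥ 1, let U be an ℓ×ℓ unimodular integer matrix, let π_1,…,π_ℓ be positive integers, let B̂ = U·diag(π_1,…,π_ℓ), and let p be a positive integer that is a common multiple of π_1,…,π_ℓ. Define the message space M_{p,ℓ} = {0,…,p/π_1 − 1} × ⋯ × {0,…,p/π_ℓ − 1} and the hypercube-shaping encoder that maps m ∈ M_{p,ℓ} to x = B̂m mod p, where each coordinate of B̂m is reduced to its representative in {0,…,p−1}. Then this encoder is a bijection from M_{p,ℓ} onto L(B̂) ∩ {0,…,p−1}^ℓ; in particular, the number of lattice points of L(B̂) in {0,…,p−1}^ℓ equals ∏_{i=1}^{ℓ} (p/π_i). -/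
open Matrix

/-- The hypercube-shaping encoder `m ↦ B̂m mod p` is a bijection from the message space
`M_{p,ℓ} = ∏ᵢ {0,…,p/πᵢ − 1}` onto the lattice code `L(B̂) ∩ {0,…,p−1}^ℓ`; in particular
the number of lattice points of `L(B̂)` in `{0,…,p−1}^ℓ` is `∏ᵢ (p/πᵢ)`. -/
theorem hs_encoder_bijOn {ℓ : ℕ} (hℓ : 1 ≤ ℓ)
    (U : Matrix (Fin ℓ) (Fin ℓ) ℤ) (hU : U.det = 1 ∨ U.det = -1)
    (π : Fin ℓ → ℤ) (hπ : ∀ i, 0 < π i)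
    (Bhat : Matrix (Fin ℓ) (Fin ℓ) ℤ) (hB : Bhat = U * Matrix.diagonal π)
    (p : ℤ) (hp : 0 < p) (hdvd : ∀ i, π i ∣ p) :
    Set.BijOn (fun m i => (Bhat.mulVec m) i % p)
        {m : Fin ℓ → ℤ | ∀ i, 0 ≤ m i ∧ m i < p / π i}
        {x : Fin ℓ → ℤ | (∃ z : Fin ℓ → ℤ, x = Bhat.mulVec z) ∧ ∀ i, 0 ≤ x i ∧ x i < p}
      ∧ (Nat.card
          {x : Fin ℓ → ℤ | (∃ z : Fin ℓ → ℤ, x = Bhat.mulVec z) ∧ ∀ i, 0 ≤ x i ∧ x i < p}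
          : ℤ) = ∏ i, (p / π i) := by
  set V : Matrix (Fin ℓ) (Fin ℓ) ℤ := U.det • U.adjugate with hV
  have hdet2 : U.det * U.det = 1 := by rcases hU with h | h <;> rw [h] <;> norm_num
  have hUV : U * V = 1 := by
    rw [hV, Matrix.mul_smul, Matrix.mul_adjugate, smul_smul, hdet2, one_smul]
  have hVU : V * U = 1 := by
    rw [hV, Matrix.smul_mul, Matrix.adjugate_mul, smul_smul, hdet2, one_smul]
  have hπp : ∀ i, π i * (p / π i) = p := fun i => Int.mul_ediv_cancel' (hdvd i)
  have hq : ∀ i, 0 < p / π i := by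
    intro i
    have := hπp i
    nlinarith [hπ i]
  have hdiag : ∀ d : Fin ℓ → ℤ, (Matrix.diagonal π).mulVec d = fun i => π i * d i := by
    intro d; funext j; simp [Matrix.mulVec_diagonal]
  have keyA : ∀ w : Fin ℓ → ℤ,
      Bhat.mulVec (fun i => (p / π i) * w i) = p • U.mulVec w := by
    intro w
    rw [hB, ← Matrix.mulVec_mulVec, hdiag]
    have : (fun i => π i * ((p / π i) * w i)) = p • w := by
      funext i
      simp only [Pi.smul_apply, smul_eq_mul, ← mul_assoc, hπp i]
    rw [this, Matrix.mulVec_smul]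
  have keyB : ∀ d k : Fin ℓ → ℤ, Bhat.mulVec d = p • k → ∀ i, (p / π i) ∣ d i := by
    intro d k h i
    rw [hB, ← Matrix.mulVec_mulVec, hdiag] at h
    have h2 : (fun i => π i * d i) = V.mulVec (p • k) := by
      have := congrArg V.mulVec h
      rwa [Matrix.mulVec_mulVec, hVU, Matrix.one_mulVec] at this
    have h3 : π i * d i = p * V.mulVec k i := by
      rw [congrFun h2 i, Matrix.mulVec_smul]
      simp
    refine ⟨V.mulVec k i, ?_⟩
    have : π i * d i = π i * ((p / π i) * V.mulVec k i) := by
      rw [h3, ← mul_assoc, hπp i]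
    exact mul_left_cancel₀ (hπ i).ne' this
  have hbij : Set.BijOn (fun m i => (Bhat.mulVec m) i % p)
        {m : Fin ℓ → ℤ | ∀ i, 0 ≤ m i ∧ m i < p / π i}
        {x : Fin ℓ → ℤ | (∃ z : Fin ℓ → ℤ, x = Bhat.mulVec z) ∧ ∀ i, 0 ≤ x i ∧ x i < p} := by
    refine ⟨?_, ?_, ?_⟩
    · -- MapsTo
      intro m hm
      constructor
      · set q : Fin ℓ → ℤ := fun i => (Bhat.mulVec m) i / p with hq'
        refine ⟨m - fun i => (p / π i) * V.mulVec q i, ?_⟩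
        rw [Matrix.mulVec_sub, keyA]
        have : U.mulVec (V.mulVec q) = q := by
          rw [Matrix.mulVec_mulVec, hUV, Matrix.one_mulVec]
        rw [this]
        funext i
        simp only [Pi.sub_apply, Pi.smul_apply, smul_eq_mul, hq']
        rw [Int.emod_def]
      · intro i
        exact ⟨Int.emod_nonneg _ hp.ne', Int.emod_lt_of_pos _ hp⟩
    · -- InjOn
      intro m hm m' hm' hf
      have hk : Bhat.mulVec (m - m') =
          p • fun i => (Bhat.mulVec m) i / p - (Bhat.mulVec m') i / p := by
        funext i
        have hfi := congrFun hf i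
        simp only at hfi
        have e1 := Int.mul_ediv_add_emod ((Bhat.mulVec m) i) p
        have e2 := Int.mul_ediv_add_emod ((Bhat.mulVec m') i) p
        simp only [Matrix.mulVec_sub, Pi.sub_apply, Pi.smul_apply, smul_eq_mul, mul_sub]
        linarith
      funext i
      have hd := keyB _ _ hk i
      have h1 := hm i
      have h2 := hm' i
      have : m i - m' i = 0 := by
        refine Int.eq_zero_of_abs_lt_dvd hd ?_
        rw [abs_sub_lt_iff]
        constructor <;> simp only [Pi.sub_apply] at * <;> omega
      omega
    · -- SurjOn
      rintro x ⟨⟨z, rfl⟩, hx⟩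
      refine ⟨fun i => z i % (p / π i), fun i => ⟨Int.emod_nonneg _ (hq i).ne',
        Int.emod_lt_of_pos _ (hq i)⟩, ?_⟩
      have hz : Bhat.mulVec (fun i => z i % (p / π i)) =
          Bhat.mulVec z - p • U.mulVec (fun i => z i / (p / π i)) := by
        have he : (fun i => z i % (p / π i))
            = z - fun i => (p / π i) * (z i / (p / π i)) := by
          funext i
          simp only [Pi.sub_apply]
          rw [Int.emod_def]
        rw [he, ← keyA, ← Matrix.mulVec_sub]
      funext i
      simp only [hz, Pi.sub_apply, Pi.smul_apply, smul_eq_mul]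
      rw [sub_eq_add_neg, ← mul_neg, Int.add_mul_emod_self_left, Int.emod_eq_of_lt (hx i).1 (hx i).2]
  refine ⟨hbij, ?_⟩
  rw [← Nat.card_congr (hbij.equiv _)]
  have : {m : Fin ℓ → ℤ | ∀ i, 0 ≤ m i ∧ m i < p / π i}
      = Set.pi Set.univ (fun i => Set.Ico 0 (p / π i)) := by
    ext m; simp [Set.mem_pi]
  rw [this, Nat.card_congr (Equiv.Set.univPi fun i => Set.Ico (0:ℤ) (p / π i)),
    Nat.card_pi]
  push_cast
  refine Finset.prod_congr rfl fun i _ => ?_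
  have : Nat.card (Set.Ico (0:ℤ) (p / π i)) = (p / π i).toNat := by
    simp [Nat.card_eq_card_toFinset]
  rw [this, Int.toNat_of_nonneg (hq i).le]
end

section
/- Let ℓ ≥ 1, let U be an ℓ×ℓ unimodular integer matrix, let π_1,…,π_ℓ be positive integers, let B̂ = U·diag(π_1,…,π_ℓ), and let p be a positive integer that is a common multiple of π_1,…,π_ℓ. Let λ > 0 be such that every nonzero v ∈ L(B̂) satisfies ‖v‖ ≥ λ. Let m ∈ M_{p,ℓ} = ∏_{i=1}^{ℓ}{0,…,p/π_i − 1}, let x = B̂m mod p (coordinates reduced to {0,…,p−1}), and let y ∈ ℝ^ℓ with ‖y − x‖ < λ/2. Then: (i) x is the unique closest point of L(B̂) to y; and (ii) the hypercube-shaping CVP decoder recovers m exactly, i.e., for each i ∈ {1,…,ℓ}, the i-th coordinate of B̂^{-1}x is an integer congruent to m_i modulo p/π_i. -/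
open Matrix

/-- The lattice generated by an integer matrix `B̂`, viewed inside the Euclidean space
`ℝ^ℓ`: the set of vectors `B̂z` with `z ∈ ℤ^ℓ`. -/
def intLattice {ℓ : ℕ} (Bhat : Matrix (Fin ℓ) (Fin ℓ) ℤ) :
    Set (EuclideanSpace ℝ (Fin ℓ)) :=
  {v | ∃ z : Fin ℓ → ℤ, ∀ i, v i = ((Bhat.mulVec z) i : ℝ)}

/-- Correctness of the hypercube-shaping CVP decoder: if `x = B̂m mod p` is the
hypercube-shaping encoding of a message `m ∈ ∏ᵢ {0,…,p/πᵢ − 1}` and `y` lies within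
distance `< λ/2` of `x`, where `λ` lower-bounds the norms of nonzero lattice points, then
(i) `x` is the unique closest point of `L(B̂)` to `y`, and (ii) `B̂⁻¹x` is an integer
vector whose `i`-th coordinate is congruent to `mᵢ` modulo `p/πᵢ`. -/
theorem hs_cvp_decoder_correct {ℓ : ℕ} (hℓ : 1 ≤ ℓ)
    (U : Matrix (Fin ℓ) (Fin ℓ) ℤ) (hU : U.det = 1 ∨ U.det = -1)
    (π : Fin ℓ → ℤ) (hπ : ∀ i, 0 < π i)
    (Bhat : Matrix (Fin ℓ) (Fin ℓ) ℤ) (hB : Bhat = U * Matrix.diagonal π)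
    (p : ℤ) (hp : 0 < p) (hdvd : ∀ i, π i ∣ p)
    (lam : ℝ) (hlam : 0 < lam)
    (hmin : ∀ v ∈ intLattice Bhat, v ≠ 0 → lam ≤ ‖v‖)
    (m : Fin ℓ → ℤ) (hm : ∀ i, 0 ≤ m i ∧ m i < p / π i)
    (x : Fin ℓ → ℤ) (hx : x = fun i => (Bhat.mulVec m) i % p)
    (xR : EuclideanSpace ℝ (Fin ℓ)) (hxR : ∀ i, xR i = (x i : ℝ))
    (y : EuclideanSpace ℝ (Fin ℓ)) (hy : ‖y - xR‖ < lam / 2) :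
    (xR ∈ intLattice Bhat ∧ ∀ v ∈ intLattice Bhat, v ≠ xR → ‖y - xR‖ < ‖y - v‖)
      ∧ ∃ w : Fin ℓ → ℤ, Bhat.mulVec w = x ∧ ∀ i, w i ≡ m i [ZMOD (p / π i)] := by
  -- integer inverse of U
  set Uinv : Matrix (Fin ℓ) (Fin ℓ) ℤ := U.det • U.adjugate with hUinvdef
  have hdet2 : U.det * U.det = 1 := by rcases hU with h | h <;> rw [h] <;> ring
  have hUU : U * Uinv = 1 := by
    rw [hUinvdef, Matrix.mul_smul, Matrix.mul_adjugate, smul_smul, hdet2, one_smul]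
  set k : Fin ℓ → ℤ := fun i => (Bhat.mulVec m) i / p with hk
  have hxk : ∀ i, x i = (Bhat.mulVec m) i - p * k i := by
    intro i; rw [hx]; simp [hk, Int.emod_def]
  set w : Fin ℓ → ℤ := fun i => m i - (p / π i) * (Uinv.mulVec k) i with hw
  have hBw : Bhat.mulVec w = x := by
    funext i
    have hdiag : (Matrix.diagonal π).mulVec w
        = (Matrix.diagonal π).mulVec m - p • (Uinv.mulVec k) := by
      funext j
      have : π j * (p / π j) = p := Int.mul_ediv_cancel' (hdvd j)
      simp only [Matrix.mulVec_diagonal, hw, Pi.sub_apply, Pi.smul_apply, smul_eq_mul,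
        mul_sub, ← mul_assoc, this]
    rw [hB, ← Matrix.mulVec_mulVec, hdiag, Matrix.mulVec_sub, Matrix.mulVec_smul,
      Matrix.mulVec_mulVec, Matrix.mulVec_mulVec, hUU, Matrix.one_mulVec, hxk i]
    simp [hB, Pi.sub_apply]
  have hxmem : xR ∈ intLattice Bhat := ⟨w, fun i => by rw [hxR, ← hBw]⟩
  refine ⟨⟨hxmem, ?_⟩, w, hBw, ?_⟩
  · intro v hv hne
    obtain ⟨z, hz⟩ := hv
    have hmem : xR - v ∈ intLattice Bhat := by
      refine ⟨fun i => w i - z i, fun i => ?_⟩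
      have h1 : (xR - v) i = xR i - v i := rfl
      have h2 : Bhat.mulVec (fun j => w j - z j) = Bhat.mulVec w - Bhat.mulVec z := by
        rw [show (fun j => w j - z j) = w - z from rfl, Matrix.mulVec_sub]
      rw [h1, hz i, hxR i, ← hBw, h2, Pi.sub_apply]
      push_cast
      ring
    have hne0 : xR - v ≠ 0 := sub_ne_zero.mpr (Ne.symm hne)
    have hlow : lam ≤ ‖xR - v‖ := hmin _ hmem hne0
    have htri' : ‖xR - v‖ ≤ ‖y - xR‖ + ‖y - v‖ := by
      have := norm_sub_le_norm_sub_add_norm_sub xR y v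
      rwa [norm_sub_rev xR y] at this
    linarith
  · intro i
    have : (p / π i) ∣ m i - w i := ⟨(Uinv.mulVec k) i, by simp [hw]⟩
    exact Int.modEq_iff_dvd.mpr this
end
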